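/- arXiv:1408.5361 — 14 statements merged into one kernel-verified Lean document; each statement's English description precedes it below -/
import Mathlib

section
/- Let F be a field and let V1, ..., Vn be finitely many valuation rings of F (i.e., subrings V of F such that for every nonzero x in F, x ∈ V or x⁻¹ ∈ V). Then the intersection A = V1 ∩ ... ∩ Vn is a Prüfer domain with quotient field F, i.e., for every prime ideal P of A, the localization A_P is a valuation ring of F. -/
/-- `V` is a valuation ring of the field `F`: for every nonzero `x`, `x ∈ V` or `x⁻¹ ∈ V`. -/
def IsValSubring {F : Type*} [Field F] (V : Subring F) : Prop :=
  ∀ x : F, x ≠ 0 → x ∈ V ∨ x⁻¹ ∈ V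

/-- The localization of the subring `A` of `F` at a prime ideal `P`, as a subset of `F`. -/
def locAt {F : Type*} [Field F] (A : Subring F) (P : Ideal A) : Set F :=
  {x : F | ∃ a s : A, s ∉ P ∧ x = (a : F) / (s : F)}

/-- `A` has quotient field `F`. -/
def HasQF {F : Type*} [Field F] (A : Subring F) : Prop :=
  ∀ x : F, ∃ a b : A, (b : F) ≠ 0 ∧ x = (a : F) / (b : F)

/-- `A` is a Prüfer domain with quotient field `F`: `F` is the quotient field of `A` and for
every prime ideal `P` of `A` the localization `A_P` is a valuation ring of `F`. -/
def IsPruferQF {F : Type*} [Field F] (A : Subring F) : Prop :=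
  HasQF A ∧ ∀ P : Ideal A, P.IsPrime → ∀ x : F, x ≠ 0 → x ∈ locAt A P ∨ x⁻¹ ∈ locAt A P

section Aux

variable {F : Type*} [Field F] {V : Subring F}

/-- In a valuation subring, if `z² ∈ V` then `z ∈ V`. -/
lemma IsValSubring.mem_of_sq (hv : IsValSubring V) {z : F} (hz : z ^ 2 ∈ V) : z ∈ V := by
  rcases eq_or_ne z 0 with rfl | h0
  · exact V.zero_mem
  rcases hv z h0 with h | h
  · exact h
  · have e : z = z ^ 2 * z⁻¹ := by field_simp
    rw [e]; exact V.mul_mem hz h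

lemma IsValSubring.inv_mem_of_not_mem (hv : IsValSubring V) {z : F} (hz : z ∉ V) : z⁻¹ ∈ V := by
  have h0 : z ≠ 0 := by rintro rfl; exact hz V.zero_mem
  rcases hv z h0 with h | h
  · exact absurd h hz
  · exact h

/-- If `g` is in the maximal ideal of a valuation subring `V` (i.e. `g ∈ V` and `g⁻¹ ∉ V`),
then `1 + g` is a unit of `V`. -/
lemma IsValSubring.oneAdd (hv : IsValSubring V) {g : F} (hg : g ∈ V) (hg' : g⁻¹ ∉ V) :
    (1 + g)⁻¹ ∈ V := by
  have hg0 : g ≠ 0 := by rintro rfl; exact hg' (by simpa using V.zero_mem)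
  have h1g : (1 : F) + g ≠ 0 := by
    intro h
    have hgm : g = -1 := by linear_combination h
    apply hg'
    rw [hgm, inv_neg, inv_one]
    exact V.neg_mem V.one_mem
  have hy0 : g * (1 + g)⁻¹ ≠ 0 := by
    exact mul_ne_zero hg0 (inv_ne_zero h1g)
  rcases hv (g * (1 + g)⁻¹) hy0 with h | h
  · have e : (1 + g)⁻¹ = 1 - g * (1 + g)⁻¹ := by field_simp; ring
    rw [e]; exact V.sub_mem V.one_mem h
  · exfalso
    apply hg'
    have e : (g * (1 + g)⁻¹)⁻¹ = g⁻¹ + 1 := by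
      rw [mul_inv, inv_inv]; field_simp
    rw [e] at h
    have := V.sub_mem h V.one_mem
    simpa using this

end Aux

/-- The auxiliary sequence `g₀ = x²`, `g_{m+1} = g_m (1 + g_m)²`. -/
def gseq {F : Type*} [Field F] (x : F) : ℕ → F
  | 0 => x ^ 2
  | m + 1 => gseq x m * (1 + gseq x m) ^ 2

/-- Key lemma: for every nonzero `x` there is `s` with `s`, `s x`, `1 - s`, `(1-s) x⁻¹` in
all of finitely many valuation subrings simultaneously. -/
theorem key_lemma {F : Type*} [Field F] {n : ℕ} {V : Fin n → Subring F}
    (hV : ∀ i, IsValSubring (V i)) {x : F} (hx : x ≠ 0) :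
    ∃ s : F, (∀ i, s ∈ V i) ∧ (∀ i, s * x ∈ V i) ∧ (∀ i, (1 - s) ∈ V i) ∧
      (∀ i, (1 - s) * x⁻¹ ∈ V i) := by
  by_cases hex : ∃ i, x ∈ V i ∧ x⁻¹ ∉ V i
  swap
  · -- no "positive" place: s = 0 works
    push_neg at hex
    refine ⟨0, fun i => (V i).zero_mem, fun i => by simpa using (V i).zero_mem,
      fun i => by simpa using (V i).one_mem, fun i => ?_⟩
    have hxi : x⁻¹ ∈ V i := by
      rcases hV i x hx with h | h
      · exact hex i h
      · exact h
    simpa using hxi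
  obtain ⟨i0, hi0x, hi0x'⟩ := hex
  set g : ℕ → F := gseq x with hgdef
  have hg0 : g 0 = x ^ 2 := rfl
  have hgs : ∀ m, g (m + 1) = g m * (1 + g m) ^ 2 := fun m => rfl
  -- The main invariant, by induction on m.
  have inv : ∀ m, (∀ i, x ∈ V i → x⁻¹ ∉ V i → g m * (x⁻¹) ^ 2 ∈ V i) ∧
      (∀ i, x ∉ V i → x ^ 2 * (g m)⁻¹ ∈ V i) ∧
      (∀ i, x ∈ V i → x⁻¹ ∈ V i → g m ∈ V i) ∧ g m ≠ 0 ∧ (1 : F) + g m ≠ 0 := by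
    -- a helper: from Qa at i0, `1 + g m ≠ 0`
    have neg1 : ∀ m, (g m * (x⁻¹) ^ 2 ∈ V i0) → (1 : F) + g m ≠ 0 := by
      intro m hQa heq
      have hgm : g m = -1 := by linear_combination heq
      rw [hgm] at hQa
      have h2 : (x⁻¹) ^ 2 ∈ V i0 := by
        have := (V i0).neg_mem hQa
        simpa using this
      exact hi0x' ((hV i0).mem_of_sq h2)
    intro m
    induction m with
    | zero =>
      have hQa0 : ∀ i, x ∈ V i → x⁻¹ ∉ V i → g 0 * (x⁻¹) ^ 2 ∈ V i := by
        intro i hxi _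
        rw [hg0]
        have e : x ^ 2 * (x⁻¹) ^ 2 = 1 := by field_simp
        rw [e]; exact (V i).one_mem
      refine ⟨hQa0, ?_, ?_, ?_, ?_⟩
      · intro i hxi
        rw [hg0]
        have e : x ^ 2 * (x ^ 2)⁻¹ = 1 := by field_simp
        rw [e]; exact (V i).one_mem
      · intro i hxi _
        rw [hg0]; exact pow_mem hxi 2
      · rw [hg0]; exact pow_ne_zero 2 hx
      · exact neg1 0 (hQa0 i0 hi0x hi0x')
    | succ m ih =>
      obtain ⟨hQa, hQb, hQc, hG, h1G⟩ := ih
      set G := g m with hGdef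
      have hstep : g (m + 1) = G * (1 + G) ^ 2 := hgs m
      have hQa' : ∀ i, x ∈ V i → x⁻¹ ∉ V i → g (m + 1) * (x⁻¹) ^ 2 ∈ V i := by
        intro i hxi hxi'
        have hq := hQa i hxi hxi'
        have hGVi : G ∈ V i := by
          have e : G = G * (x⁻¹) ^ 2 * x ^ 2 := by field_simp
          rw [e]; exact (V i).mul_mem hq (pow_mem hxi 2)
        have h1GVi : (1 : F) + G ∈ V i := (V i).add_mem (V i).one_mem hGVi
        have e : g (m + 1) * (x⁻¹) ^ 2 = (G * (x⁻¹) ^ 2) * ((1 + G) ^ 2) := by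
          rw [hstep]; ring
        rw [e]; exact (V i).mul_mem hq (pow_mem h1GVi 2)
      have hQb' : ∀ i, x ∉ V i → x ^ 2 * (g (m + 1))⁻¹ ∈ V i := by
        intro i hxi
        have hq := hQb i hxi
        have hGn : G ∉ V i := by
          intro hc
          apply hxi
          apply (hV i).mem_of_sq
          have e : x ^ 2 = x ^ 2 * G⁻¹ * G := by field_simp
          rw [e]; exact (V i).mul_mem hq hc
        have hGinv : G⁻¹ ∈ V i := (hV i).inv_mem_of_not_mem hGn
        have hGii : (G⁻¹)⁻¹ ∉ V i := by rw [inv_inv]; exact hGn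
        have hu : (1 + G⁻¹)⁻¹ ∈ V i := (hV i).oneAdd hGinv hGii
        have id2 : (1 + G)⁻¹ = G⁻¹ * (1 + G⁻¹)⁻¹ := by
          have e : (1 : F) + G⁻¹ = G⁻¹ * (1 + G) := by field_simp; ring
          rw [e, mul_inv, inv_inv, ← mul_assoc, inv_mul_cancel₀ hG, one_mul]
        have e : x ^ 2 * (g (m + 1))⁻¹ = (x ^ 2 * G⁻¹) * ((1 + G)⁻¹) ^ 2 := by
          rw [hstep, mul_inv, inv_pow]; ring
        rw [e, id2]
        exact (V i).mul_mem hq (pow_mem ((V i).mul_mem hGinv hu) 2)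
      have hQc' : ∀ i, x ∈ V i → x⁻¹ ∈ V i → g (m + 1) ∈ V i := by
        intro i hxi hxi'
        rw [hstep]
        exact (V i).mul_mem (hQc i hxi hxi')
          (pow_mem ((V i).add_mem (V i).one_mem (hQc i hxi hxi')) 2)
      refine ⟨hQa', hQb', hQc', ?_, neg1 (m + 1) (hQa' i0 hi0x hi0x')⟩
      rw [hstep]
      exact mul_ne_zero hG (pow_ne_zero 2 h1G)
  -- Persistence: membership in the maximal ideal is preserved
  have Mstep : ∀ m i, (g m ∈ V i ∧ (g m)⁻¹ ∉ V i) → (g (m + 1) ∈ V i ∧ (g (m + 1))⁻¹ ∉ V i) := by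
    intro m i ⟨h1, h2⟩
    have hG : g m ≠ 0 := (inv m).2.2.2.1
    have h1G : (1 : F) + g m ≠ 0 := (inv m).2.2.2.2
    have h1GVi : (1 : F) + g m ∈ V i := (V i).add_mem (V i).one_mem h1
    constructor
    · rw [hgs m]; exact (V i).mul_mem h1 (pow_mem h1GVi 2)
    · intro hc
      apply h2
      have e : (g m)⁻¹ = (g (m + 1))⁻¹ * (1 + g m) ^ 2 := by
        rw [hgs m, mul_inv]
        field_simp
      rw [e]; exact (V i).mul_mem hc (pow_mem h1GVi 2)
  have Mmono : ∀ m k i, m ≤ k → (g m ∈ V i ∧ (g m)⁻¹ ∉ V i) →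
      (g k ∈ V i ∧ (g k)⁻¹ ∉ V i) := by
    intro m k i hmk
    induction k, hmk using Nat.le_induction with
    | base => exact id
    | succ k hmk ih => exact fun h => Mstep k i (ih h)
  have BadM : ∀ m i, g m ∈ V i → (1 + g m)⁻¹ ∉ V i →
      (g (m + 1) ∈ V i ∧ (g (m + 1))⁻¹ ∉ V i) := by
    intro m i hz hb
    have hG : g m ≠ 0 := (inv m).2.2.2.1
    have h1G : (1 : F) + g m ≠ 0 := (inv m).2.2.2.2
    have h1GVi : (1 : F) + g m ∈ V i := (V i).add_mem (V i).one_mem hz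
    constructor
    · rw [hgs m]; exact (V i).mul_mem hz (pow_mem h1GVi 2)
    · intro hc
      apply hb
      apply (hV i).mem_of_sq
      have e : ((1 + g m)⁻¹) ^ 2 = (g (m + 1))⁻¹ * g m := by
        rw [hgs m, mul_inv, inv_pow]
        field_simp
      rw [e]; exact (V i).mul_mem hc hz
  have MnotBad : ∀ m i, (g m ∈ V i ∧ (g m)⁻¹ ∉ V i) → (1 + g m)⁻¹ ∈ V i := by
    intro m i h
    exact (hV i).oneAdd h.1 h.2
  -- Pigeonhole: for some m ≤ n, no place is bad at stage m
  have pigeon : ∃ m, ∀ i, x ∈ V i → x⁻¹ ∈ V i → (1 + g m)⁻¹ ∈ V i := by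
    by_contra hc
    push_neg at hc
    have hc' : ∀ m : ℕ, ∃ i, x ∈ V i ∧ x⁻¹ ∈ V i ∧ (1 + g m)⁻¹ ∉ V i := by
      intro m
      obtain ⟨i, h1, h2, h3⟩ := hc m
      exact ⟨i, h1, h2, h3⟩
    set f : Fin (n + 1) → Fin n := fun m => (hc' m.1).choose with hf
    have hfspec : ∀ m : Fin (n + 1), x ∈ V (f m) ∧ x⁻¹ ∈ V (f m) ∧
        (1 + g m.1)⁻¹ ∉ V (f m) := fun m => (hc' m.1).choose_spec
    have hkey : ∀ a b : Fin (n + 1), a.1 < b.1 → f a ≠ f b := by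
      intro a b hab heq
      obtain ⟨ha1, ha2, ha3⟩ := hfspec a
      obtain ⟨hb1, hb2, hb3⟩ := hfspec b
      -- At stage a, place (f a) is bad, hence in the maximal ideal from a+1 on
      have hza : g a.1 ∈ V (f a) := (inv a.1).2.2.1 (f a) ha1 ha2
      have hM := BadM a.1 (f a) hza ha3
      have hMb := Mmono (a.1 + 1) b.1 (f a) (by omega) hM
      have := MnotBad b.1 (f a) hMb
      rw [heq] at this
      exact hb3 this
    have hinj : Function.Injective f := by
      intro a b heq
      by_contra hne
      rcases Nat.lt_or_ge a.1 b.1 with h | h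
      · exact hkey a b h heq
      · have : b.1 < a.1 := by
          rcases Nat.lt_or_ge b.1 a.1 with h' | h'
          · exact h'
          · exact absurd (Fin.ext (le_antisymm h' h)) hne
        exact hkey b a this heq.symm
    have := Fintype.card_le_of_injective f hinj
    simp at this
  obtain ⟨m, hgood⟩ := pigeon
  obtain ⟨hQa, hQb, hQc, hG, h1G⟩ := inv m
  set G := g m with hGdef
  refine ⟨(1 + G)⁻¹, ?_⟩
  set s : F := (1 + G)⁻¹ with hsdef
  have idA : 1 - s = G * s := by
    rw [hsdef]; field_simp; ring
  have main : ∀ i, s ∈ V i ∧ s * x ∈ V i ∧ (1 - s) ∈ V i ∧ (1 - s) * x⁻¹ ∈ V i := by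
    intro i
    by_cases hxi : x ∈ V i
    · by_cases hxi' : x⁻¹ ∈ V i
      · -- Zero place
        have hs : s ∈ V i := hgood i hxi hxi'
        have hGVi : G ∈ V i := hQc i hxi hxi'
        refine ⟨hs, (V i).mul_mem hs hxi, ?_, ?_⟩
        · rw [idA]; exact (V i).mul_mem hGVi hs
        · rw [idA]; exact (V i).mul_mem ((V i).mul_mem hGVi hs) hxi'
      · -- Positive place
        have hq := hQa i hxi hxi'
        have hGVi : G ∈ V i := by
          have e : G = G * (x⁻¹) ^ 2 * x ^ 2 := by field_simp
          rw [e]; exact (V i).mul_mem hq (pow_mem hxi 2)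
        have hGinvn : G⁻¹ ∉ V i := by
          intro hcc
          apply hxi'
          apply (hV i).mem_of_sq
          have e : (x⁻¹) ^ 2 = G * (x⁻¹) ^ 2 * G⁻¹ := by field_simp
          rw [e]; exact (V i).mul_mem hq hcc
        have hs : s ∈ V i := (hV i).oneAdd hGVi hGinvn
        refine ⟨hs, (V i).mul_mem hs hxi, ?_, ?_⟩
        · rw [idA]; exact (V i).mul_mem hGVi hs
        · rw [idA]
          have e : G * s * x⁻¹ = (G * (x⁻¹) ^ 2) * (s * x) := by field_simp
          rw [e]; exact (V i).mul_mem hq ((V i).mul_mem hs hxi)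
    · -- Negative place
      have hq := hQb i hxi
      have hxinv : x⁻¹ ∈ V i := (hV i).inv_mem_of_not_mem hxi
      have hGn : G ∉ V i := by
        intro hcc
        apply hxi
        apply (hV i).mem_of_sq
        have e : x ^ 2 = x ^ 2 * G⁻¹ * G := by field_simp
        rw [e]; exact (V i).mul_mem hq hcc
      have hGinv : G⁻¹ ∈ V i := (hV i).inv_mem_of_not_mem hGn
      have hGii : (G⁻¹)⁻¹ ∉ V i := by rw [inv_inv]; exact hGn
      have hu : (1 + G⁻¹)⁻¹ ∈ V i := (hV i).oneAdd hGinv hGii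
      have eaux : (1 : F) + G⁻¹ = G⁻¹ * (1 + G) := by field_simp; ring
      have id2 : s = G⁻¹ * (1 + G⁻¹)⁻¹ := by
        rw [hsdef, eaux, mul_inv, inv_inv, ← mul_assoc, inv_mul_cancel₀ hG, one_mul]
      have id4 : 1 - s = (1 + G⁻¹)⁻¹ := by
        rw [eaux, mul_inv, inv_inv, idA, hsdef]
      refine ⟨?_, ?_, ?_, ?_⟩
      · rw [id2]; exact (V i).mul_mem hGinv hu
      · have ex : x ^ 2 * x⁻¹ = x := by field_simp
        have e : s * x = (x ^ 2 * G⁻¹) * ((1 + G⁻¹)⁻¹ * x⁻¹) := by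
          rw [id2]
          calc G⁻¹ * (1 + G⁻¹)⁻¹ * x = G⁻¹ * (1 + G⁻¹)⁻¹ * (x ^ 2 * x⁻¹) := by rw [ex]
          _ = (x ^ 2 * G⁻¹) * ((1 + G⁻¹)⁻¹ * x⁻¹) := by ring
        rw [e]; exact (V i).mul_mem hq ((V i).mul_mem hu hxinv)
      · rw [id4]; exact hu
      · rw [id4]; exact (V i).mul_mem hu hxinv
  exact ⟨fun i => (main i).1, fun i => (main i).2.1, fun i => (main i).2.2.1,
    fun i => (main i).2.2.2⟩

/-- Nagata: a finite intersection of valuation rings of a field `F` is a Prüfer domain with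
quotient field `F`. -/
theorem finite_intersection_of_valuation_rings_isPrufer
    {F : Type*} [Field F] (n : ℕ) (V : Fin n → Subring F)
    (hV : ∀ i, IsValSubring (V i)) (A : Subring F)
    (hA : ∀ x : F, x ∈ A ↔ ∀ i, x ∈ V i) :
    IsPruferQF A := by
  constructor
  · -- HasQF
    intro x
    by_cases hx : x = 0
    · refine ⟨0, 1, ?_, ?_⟩
      · simpa using (one_ne_zero : (1 : F) ≠ 0)
      · simp [hx]
    · obtain ⟨s, h1, h2, h3, h4⟩ := key_lemma hV hx
      by_cases hs : s = 0
      · -- then 1 - s = 1 and x⁻¹ ∈ A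
        refine ⟨1, ⟨x⁻¹, (hA _).2 (fun i => by simpa [hs] using h4 i)⟩, ?_, ?_⟩
        · simpa using inv_ne_zero hx
        · simp [one_div, inv_inv]
      · refine ⟨⟨s * x, (hA _).2 h2⟩, ⟨s, (hA _).2 h1⟩, hs, ?_⟩
        exact (mul_div_cancel_left₀ _ hs).symm
  · -- Prüfer
    intro P hP x hx
    obtain ⟨s, h1, h2, h3, h4⟩ := key_lemma hV hx
    set sA : A := ⟨s, (hA _).2 h1⟩ with hsA
    set tA : A := ⟨1 - s, (hA _).2 h3⟩ with htA
    have hsum : sA + tA = 1 := by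
      ext; simp [hsA, htA]
    by_cases hsP : sA ∈ P
    · -- then tA ∉ P, and x⁻¹ ∈ locAt
      have htP : tA ∉ P := by
        intro htP
        have : (1 : A) ∈ P := hsum ▸ P.add_mem hsP htP
        exact hP.ne_top ((Ideal.eq_top_iff_one _).2 this)
      right
      refine ⟨⟨(1 - s) * x⁻¹, (hA _).2 h4⟩, tA, htP, ?_⟩
      have hts : (1 : F) - s ≠ 0 := by
        intro h0
        apply htP
        have : tA = 0 := by ext; simp [htA, h0]
        rw [this]; exact P.zero_mem
      exact (mul_div_cancel_left₀ _ hts).symm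
    · left
      refine ⟨⟨s * x, (hA _).2 h2⟩, sA, hsP, ?_⟩
      have hs0 : s ≠ 0 := by
        intro h0
        apply hsP
        have : sA = 0 := by ext; simp [hsA, h0]
        rw [this]; exact P.zero_mem
      exact (mul_div_cancel_left₀ _ hs0).symm
end

section
/- Let F be a field, A a subring of F that is an intersection of valuation rings of F, and suppose for every nonzero t ∈ F there exists a polynomial f_t(T) ∈ A[T] of positive degree d_t such that both 1 and t^{d_t} lie in the principal ideal f_t(t)·A (as a fractional ideal). Then A is a Prüfer domain with quotient field F. -/
/-- If `A` is an intersection of valuation rings of `F` and for each nonzero `t ∈ F` there is a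
polynomial `f_t ∈ A[T]` of positive degree `d_t` with `1, t^{d_t} ∈ f_t(t)A`, then `A` is a
Prüfer domain with quotient field `F`. -/
theorem prufer_of_polynomial_condition
    {F : Type*} [Field F] (Z : Set (Subring F)) (hZ : ∀ V ∈ Z, IsValSubring V)
    (A : Subring F) (hA : ∀ x : F, x ∈ A ↔ ∀ V ∈ Z, x ∈ V)
    (h : ∀ t : F, t ≠ 0 → ∃ f : Polynomial A, 0 < f.natDegree ∧
      (∃ a : A, (1 : F) = Polynomial.eval₂ A.subtype t f * (a : F)) ∧
      (∃ b : A, t ^ f.natDegree = Polynomial.eval₂ A.subtype t f * (b : F))) :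
    IsPruferQF A := by
  have key : ∀ P : Ideal A, P.IsPrime → ∀ t : F, t ≠ 0 →
      t ∈ locAt A P ∨ t⁻¹ ∈ locAt A P := by
    intro P hP t ht
    obtain ⟨f, hd, ⟨a, ha⟩, ⟨b, hb⟩⟩ := h t ht
    set d := f.natDegree with hdd
    have hab : (b : F) = (a : F) * t ^ d := by
      calc (b : F) = 1 * b := (one_mul _).symm
        _ = (Polynomial.eval₂ A.subtype t f * a) * b := by rw [← ha]
        _ = (a : F) * (Polynomial.eval₂ A.subtype t f * b) := by ring
        _ = (a : F) * t ^ d := by rw [← hb]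
    -- membership of a * c * t^e in A for e ≤ d
    have aux : ∀ (c : A) (e : ℕ), e ≤ d → (a : F) * (c : F) * t ^ e ∈ A := by
      intro c e he
      rw [hA]
      intro V hV
      have hAV : ∀ x : A, (x : F) ∈ V := fun x => (hA x).mp x.2 V hV
      rcases hZ V hV t ht with htV | htV
      · exact mul_mem (mul_mem (hAV a) (hAV c)) (pow_mem htV e)
      · have hpow : t ^ d * (t⁻¹) ^ (d - e) = t ^ e := by
          have hsplit : t ^ d = t ^ e * t ^ (d - e) := by
            rw [← pow_add, Nat.add_sub_cancel' he]
          rw [hsplit, inv_pow, mul_inv_cancel_right₀ (pow_ne_zero _ ht)]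
        have heq : (a : F) * c * t ^ e = (b : F) * c * (t⁻¹) ^ (d - e) := by
          rw [hab, ← hpow]; ring
        rw [heq]
        exact mul_mem (mul_mem (hAV b) (hAV c)) (pow_mem htV _)
    have hsum : ∑ i ∈ Finset.range (d + 1), (a : F) * (f.coeff i : F) * t ^ i = 1 := by
      have h1 := ha
      rw [Polynomial.eval₂_eq_sum_range, Finset.sum_mul] at h1
      rw [h1]
      exact Finset.sum_congr rfl fun i _ => by simp only [Subring.coe_subtype]; ring
    set W : ℕ → A := fun i => if hi : i ≤ d then
        ⟨(a : F) * (f.coeff i : F) * t ^ i, aux _ i hi⟩ else 0 with hWdef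
    have hW : ∀ i, i ≤ d → (W i : F) = (a : F) * (f.coeff i : F) * t ^ i := by
      intro i hi
      simp only [hWdef, dif_pos hi]
    have hWsum : ∑ i ∈ Finset.range (d + 1), W i = 1 := by
      apply Subtype.coe_injective
      push_cast
      rw [← hsum]
      exact Finset.sum_congr rfl fun i hi => hW i (Nat.lt_succ_iff.mp (Finset.mem_range.mp hi))
    have hj : ∃ j ∈ Finset.range (d + 1), W j ∉ P := by
      by_contra hcon
      push_neg at hcon
      have h1P : (1 : A) ∈ P := hWsum ▸ Ideal.sum_mem P hcon
      exact hP.ne_top ((Ideal.eq_top_iff_one P).mpr h1P)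
    obtain ⟨j, hjr, hjP⟩ := hj
    have hjd : j ≤ d := Nat.lt_succ_iff.mp (Finset.mem_range.mp hjr)
    have hWj0 : (a : F) * (f.coeff j : F) * t ^ j ≠ 0 := by
      intro h0
      apply hjP
      have : W j = 0 := by
        rw [← ZeroMemClass.coe_eq_zero, hW j hjd]; exact h0
      rw [this]; exact P.zero_mem
    rcases lt_or_eq_of_le hjd with hlt | heqd
    · left
      refine ⟨⟨_, aux (f.coeff j) (j + 1) hlt⟩, W j, hjP, ?_⟩
      show t = ((a : F) * (f.coeff j : F) * t ^ (j + 1)) / ((W j : F))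
      rw [hW j hjd, eq_div_iff hWj0]
      ring
    · right
      subst heqd
      refine ⟨⟨_, aux (f.coeff d) (d - 1) (by omega)⟩, W d, hjP, ?_⟩
      show t⁻¹ = ((a : F) * (f.coeff d : F) * t ^ (d - 1)) / ((W d : F))
      rw [hW d le_rfl, eq_div_iff hWj0]
      have hp : t ^ d = t ^ (d - 1) * t := by
        rw [← pow_succ, Nat.sub_add_cancel hd]
      rw [hp]
      field_simp
  constructor
  · intro x
    by_cases hx : x = 0
    · exact ⟨0, 1, by simp, by simp [hx]⟩
    · rcases key ⊥ Ideal.bot_prime x hx with hc | hc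
      · obtain ⟨p, s, hs, hxe⟩ := hc
        refine ⟨p, s, ?_, hxe⟩
        intro h0
        exact hs (by rw [Ideal.mem_bot, ← ZeroMemClass.coe_eq_zero]; exact h0)
      · obtain ⟨p, s, hs, hxe⟩ := hc
        have hp0 : (p : F) ≠ 0 := by
          intro h0
          rw [h0, zero_div] at hxe
          exact hx (by rw [← inv_inv x, hxe, inv_zero])
        refine ⟨s, p, hp0, ?_⟩
        rw [← inv_inv x, hxe, inv_div]
  · exact key
end

section
/- Let F be a field, Z a set of valuation rings of F, and A = ⋂_{V ∈ Z} V. Let t0, ..., tn be nonzero elements of F and f ∈ A[T0, ..., Tn] a homogeneous polynomial of positive degree d with u := f(t0, ..., tn) ≠ 0. If t_i^d ∈ uA for all i = 0, ..., n, then (t0, ..., tn)^d A = uA, where (t0, ..., tn)A denotes the A-submodule of F generated by t0, ..., tn. -/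
/-- In a valuation subring, among finitely many nonzero elements there is one dividing all. -/
lemma exists_max_val {F : Type*} [Field F] (V : Subring F) (hV : IsValSubring V) :
    ∀ (n : ℕ) (t : Fin (n + 1) → F), (∀ i, t i ≠ 0) → ∃ i, ∀ j, t j / t i ∈ V := by
  intro n
  induction n with
  | zero =>
    intro t ht
    exact ⟨0, fun j => by rw [Fin.eq_zero j, div_self (ht 0)]; exact one_mem V⟩
  | succ m ih =>
    intro t ht
    obtain ⟨i, hi⟩ := ih (fun k => t k.succ) (fun k => ht k.succ)
    rcases hV (t 0 / t i.succ) (div_ne_zero (ht 0) (ht i.succ)) with h0 | h0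
    · refine ⟨i.succ, fun j => ?_⟩
      rcases Fin.eq_zero_or_eq_succ j with rfl | ⟨k, rfl⟩
      · exact h0
      · exact hi k
    · rw [inv_div] at h0
      refine ⟨0, fun j => ?_⟩
      rcases Fin.eq_zero_or_eq_succ j with rfl | ⟨k, rfl⟩
      · rw [div_self (ht 0)]; exact one_mem V
      · have := mul_mem (hi k) h0
        rwa [div_mul_div_cancel₀ (ht i.succ)] at this

lemma prod_pow_mem_pow {F : Type*} [Field F] {A : Subring F}
    (M : Submodule A F) {ι : Type*} (x : ι → F) (hx : ∀ i, x i ∈ M)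
    (s : Finset ι) (m : ι → ℕ) :
    (∏ i ∈ s, x i ^ m i) ∈ M ^ (∑ i ∈ s, m i) := by
  classical
  induction s using Finset.induction_on with
  | empty =>
    rw [Finset.prod_empty, Finset.sum_empty, pow_zero, Submodule.one_eq_span]
    exact Submodule.mem_span_singleton_self 1
  | insert _ _ hni ih =>
    rw [Finset.prod_insert hni, Finset.sum_insert hni, pow_add]
    exact Submodule.mul_mem_mul (Submodule.pow_mem_pow M (hx _) _) ih

/-- If `f` is homogeneous of positive degree `d` with `u = f(t₀,…,tₙ) ≠ 0` and each
`tᵢ^d ∈ uA`, then `(t₀,…,tₙ)^d A = uA` as `A`-submodules of `F`. -/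
theorem pow_span_eq_span_singleton_of_homogeneous
    {F : Type*} [Field F] (Z : Set (Subring F)) (hZ : ∀ V ∈ Z, IsValSubring V)
    (A : Subring F) (hA : ∀ x : F, x ∈ A ↔ ∀ V ∈ Z, x ∈ V)
    (n : ℕ) (t : Fin (n + 1) → F) (ht : ∀ i, t i ≠ 0)
    (f : MvPolynomial (Fin (n + 1)) A) (d : ℕ) (hd : 0 < d)
    (hf : f.IsHomogeneous d)
    (u : F) (hu : u = MvPolynomial.eval₂ A.subtype t f) (hu0 : u ≠ 0)
    (h : ∀ i, t i ^ d ∈ Submodule.span A ({u} : Set F)) :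
    (Submodule.span A (Set.range t)) ^ d = Submodule.span A ({u} : Set F) := by
  classical
  apply le_antisymm
  · -- span(t)^d ≤ uA
    rw [Submodule.span_pow]
    apply Submodule.span_le.mpr
    intro x hx
    obtain ⟨g, hg⟩ := Set.mem_pow.mp hx
    -- each g k is some t (idx k)
    choose idx hidx using fun k => (g k).2
    have hxprod : x = ∏ k : Fin d, t (idx k) := by
      rw [← hg, List.prod_ofFn]
      exact Finset.prod_congr rfl fun k _ => (hidx k).symm
    -- show x / u ∈ A
    have hxu : x / u ∈ A := by
      rw [hA]
      intro V hV
      obtain ⟨i, hi⟩ := exists_max_val V (hZ V hV) n t ht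
      obtain ⟨a, ha⟩ := Submodule.mem_span_singleton.mp (h i)
      have hta : t i ^ d / u = (a : F) := by
        rw [← ha, show a • u = (a : F) * u from rfl]
        field_simp
      have h1 : t i ^ d / u ∈ V := by
        rw [hta]; exact (hA a).mp a.2 V hV
      have h2 : x / t i ^ d ∈ V := by
        have : x / t i ^ d = ∏ k : Fin d, (t (idx k) / t i) := by
          rw [hxprod, Finset.prod_div_distrib, Finset.prod_const, Finset.card_univ,
            Fintype.card_fin]
        rw [this]
        exact prod_mem fun k _ => hi (idx k)
      have := mul_mem h2 h1
      rwa [div_mul_div_cancel₀ (pow_ne_zero d (ht i))] at this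
    rw [SetLike.mem_coe, Submodule.mem_span_singleton]
    exact ⟨⟨x / u, hxu⟩, show (x / u) * u = x from div_mul_cancel₀ x hu0⟩
  · -- uA ≤ span(t)^d : it suffices that u ∈ span(t)^d
    apply Submodule.span_le.mpr
    rintro x rfl
    rw [SetLike.mem_coe, hu, MvPolynomial.eval₂_eq]
    apply Submodule.sum_mem
    intro m hm
    have hdeg : ∑ i ∈ m.support, m i = d := by
      have := hf (MvPolynomial.mem_support_iff.mp hm)
      rw [show (Finsupp.weight (1 : Fin (n + 1) → ℕ)) = Finsupp.weight (fun _ => 1) from rfl,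
        ← Finsupp.degree_eq_weight_one] at this
      exact this
    have hprod : (∏ i ∈ m.support, t i ^ m i) ∈ (Submodule.span A (Set.range t)) ^ d := by
      rw [← hdeg]
      exact prod_pow_mem_pow _ t (fun i => Submodule.subset_span (Set.mem_range_self i)) _ _
    have : (A.subtype (MvPolynomial.coeff m f) : F) * ∏ i ∈ m.support, t i ^ m i
        = (MvPolynomial.coeff m f) • (∏ i ∈ m.support, t i ^ m i) := rfl
    rw [this]
    exact Submodule.smul_mem _ _ hprod
end

section
/- Let R = ⊕_{i≥0} R_i be a commutative graded ring, P a homogeneous prime ideal of R not containing R_1, and I = ⊕_{i≥0} I_i a homogeneous ideal with I ⊄ P. Then there exists e0 > 0 such that for all e ≥ e0 and all r ∈ R, the homogeneous component I_e is not contained in the coset P + r. -/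
/-- Coset homogeneous prime avoidance, single-prime case: if `P` is a homogeneous prime not
containing `R₁` and `I` is a homogeneous ideal with `I ⊄ P`, then there is `e₀ > 0` such that
for all `e ≥ e₀` and all `r`, the component `I_e` is not contained in the coset `P + r`. -/
theorem coset_homogeneous_prime_avoidance_one
    {A : Type*} [CommRing A] (𝒜 : ℕ → Submodule ℤ A) [GradedRing 𝒜]
    (P : Ideal A) (hPp : P.IsPrime) (hPh : Ideal.IsHomogeneous 𝒜 P)
    (hP1 : ¬ ((𝒜 1 : Set A) ⊆ (P : Set A)))
    (I : Ideal A) (hIh : Ideal.IsHomogeneous 𝒜 I) (hIP : ¬ I ≤ P) :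
    ∃ e0 : ℕ, 0 < e0 ∧ ∀ e ≥ e0, ∀ r : A,
      ∃ x, x ∈ I ∧ x ∈ 𝒜 e ∧ ∀ p ∈ P, x ≠ p + r := by
  obtain ⟨t, ht1, htP⟩ := Set.not_subset.mp hP1
  obtain ⟨x, hxI, hxP⟩ := SetLike.not_le_iff_exists.mp hIP
  -- find a homogeneous component of x not in P
  have hcomp : ∃ d : ℕ, (DirectSum.decompose 𝒜 x d : A) ∈ I ∧
      (DirectSum.decompose 𝒜 x d : A) ∉ P := by
    by_contra h
    push_neg at h
    apply hxP
    classical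
    rw [← DirectSum.sum_support_decompose 𝒜 x]
    exact Ideal.sum_mem _ fun i _ => h i (hIh i hxI)
  obtain ⟨d, hdI, hdP⟩ := hcomp
  set xd : A := (DirectSum.decompose 𝒜 x d : A) with hxd
  have hxdmem : xd ∈ 𝒜 d := SetLike.coe_mem _
  refine ⟨d + 1, Nat.succ_pos d, fun e he r => ?_⟩
  set n : ℕ := e - d with hn
  have hen : e = d + n := by omega
  set y : A := xd * t ^ n with hy
  have hymem : y ∈ 𝒜 e := by
    rw [hen]
    have := SetLike.pow_mem_graded n ht1
    rw [smul_eq_mul, mul_one] at this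
    exact SetLike.mul_mem_graded hxdmem this
  have hyI : y ∈ I := Ideal.mul_mem_right _ _ hdI
  have hyP : y ∉ P := by
    intro h
    rcases hPp.mem_or_mem h with h' | h'
    · exact hdP h'
    · exact htP (hPp.mem_of_pow_mem n h')
  by_cases hc : ∃ p ∈ P, y = p + r
  · obtain ⟨p, hp, hpr⟩ := hc
    refine ⟨y + y, Ideal.add_mem _ hyI hyI, Submodule.add_mem _ hymem hymem, ?_⟩
    intro p' hp' heq
    apply hyP
    have : y = p' - p := by linear_combination heq - hpr
    rw [this]
    exact Ideal.sub_mem _ hp' hp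
  · push_neg at hc
    exact ⟨y, hyI, hymem, fun p hp heq => hc p hp heq⟩
end

section
/- Let R = ⊕_{i≥0} R_i be a commutative graded ring, let P1, ..., Pn be pairwise incomparable (under inclusion) homogeneous prime ideals none of which contains R_1, and let I be a homogeneous ideal with I ⊄ P_i for each i. Then there exists e0 > 0 such that for all e ≥ e0 and all choices of elements r1, ..., rn ∈ R, the homogeneous component I_e is not contained in the union of the cosets (P_1 + r_1) ∪ ... ∪ (P_n + r_n). -/
lemma homog_mem_not_mem {A : Type*} [CommRing A] (𝒜 : ℕ → Submodule ℤ A) [GradedRing 𝒜]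
    (J P : Ideal A) (hJ : Ideal.IsHomogeneous 𝒜 J) (hP : Ideal.IsHomogeneous 𝒜 P)
    (h : ¬ J ≤ P) : ∃ d x, x ∈ 𝒜 d ∧ x ∈ J ∧ x ∉ P := by
  classical
  obtain ⟨a, haJ, haP⟩ := Set.not_subset.mp h
  by_contra hc
  push_neg at hc
  apply haP
  rw [← DirectSum.sum_support_decompose 𝒜 a]
  exact Ideal.sum_mem _ fun d _ => hc d _ (SetLike.coe_mem _) (hJ d haJ)

/-- Coset homogeneous prime avoidance: if `P₁, …, Pₙ` are pairwise incomparable homogeneous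
primes none containing `R₁` and `I` is a homogeneous ideal with `I ⊄ Pᵢ` for each `i`, then
there is `e₀ > 0` such that for all `e ≥ e₀` and all `r₁, …, rₙ`, the component `I_e` is not
contained in `(P₁ + r₁) ∪ ⋯ ∪ (Pₙ + rₙ)`. -/
theorem coset_homogeneous_prime_avoidance
    {A : Type*} [CommRing A] (𝒜 : ℕ → Submodule ℤ A) [GradedRing 𝒜]
    (n : ℕ) (P : Fin n → Ideal A) (hPp : ∀ i, (P i).IsPrime)
    (hPh : ∀ i, Ideal.IsHomogeneous 𝒜 (P i))
    (hinc : ∀ i j, i ≠ j → ¬ P i ≤ P j)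
    (hP1 : ∀ i, ¬ ((𝒜 1 : Set A) ⊆ (P i : Set A)))
    (I : Ideal A) (hIh : Ideal.IsHomogeneous 𝒜 I) (hIP : ∀ i, ¬ I ≤ P i) :
    ∃ e0 : ℕ, 0 < e0 ∧ ∀ e ≥ e0, ∀ r : Fin n → A,
      ∃ x, x ∈ I ∧ x ∈ 𝒜 e ∧ ∀ i, ∀ p ∈ P i, x ≠ p + r i := by
  classical
  choose t ht1 htP using fun i => Set.not_subset.mp (hP1 i)
  have hb : ∀ i : Fin n, ∃ d x, x ∈ 𝒜 d ∧ x ∈ I ∧ x ∉ P i ∧ ∀ j, j ≠ i → x ∈ P j := by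
    intro i
    have key : ∀ s : Finset (Fin n), i ∉ s →
        ∃ d x, x ∈ 𝒜 d ∧ x ∈ I ∧ x ∉ P i ∧ ∀ j ∈ s, x ∈ P j := by
      intro s
      induction s using Finset.induction with
      | empty =>
        intro _
        obtain ⟨d, x, h1, h2, h3⟩ := homog_mem_not_mem 𝒜 I (P i) hIh (hPh i) (hIP i)
        exact ⟨d, x, h1, h2, h3, by simp⟩
      | insert j s hjs ih =>
        intro his
        have hji : j ≠ i := by rintro rfl; exact his (Finset.mem_insert_self j s)
        obtain ⟨d, x, hx1, hx2, hx3, hx4⟩ := ih (fun h => his (Finset.mem_insert_of_mem h))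
        obtain ⟨d', y, hy1, hy2, hy3⟩ :=
          homog_mem_not_mem 𝒜 (P j) (P i) (hPh j) (hPh i) (hinc j i hji)
        refine ⟨d + d', x * y, SetLike.mul_mem_graded hx1 hy1, I.mul_mem_right _ hx2, ?_, ?_⟩
        · intro h
          rcases (hPp i).mem_or_mem h with h | h
          exacts [hx3 h, hy3 h]
        · intro k hk
          rcases Finset.mem_insert.mp hk with rfl | hk
          · exact (P k).mul_mem_left _ hy2
          · exact (P k).mul_mem_right _ (hx4 k hk)
    obtain ⟨d, x, h1, h2, h3, h4⟩ := key (Finset.univ.erase i) (Finset.notMem_erase i _)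
    exact ⟨d, x, h1, h2, h3, fun j hj =>
      h4 j (Finset.mem_erase.mpr ⟨hj, Finset.mem_univ j⟩)⟩
  choose D b hb1 hb2 hb3 hb4 using hb
  refine ⟨(Finset.univ.sup D) + 1, Nat.succ_pos _, ?_⟩
  intro e he r
  have hDe : ∀ i, D i ≤ e := fun i =>
    le_trans (Finset.le_sup (Finset.mem_univ i)) (by omega)
  set S : Finset (Fin n) := Finset.univ.filter (fun i => r i ∈ P i) with hS
  set y : Fin n → A := fun i => b i * t i ^ (e - D i) with hy
  have hyA : ∀ i, y i ∈ 𝒜 e := by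
    intro i
    have h := SetLike.mul_mem_graded (hb1 i) (SetLike.pow_mem_graded (e - D i) (ht1 i))
    have : D i + (e - D i) • 1 = e := by
      have := hDe i; simp [smul_eq_mul]; omega
    rwa [this] at h
  have hyiP : ∀ i, y i ∉ P i := by
    intro i h
    rcases (hPp i).mem_or_mem h with h | h
    · exact hb3 i h
    · exact htP i ((hPp i).mem_of_pow_mem _ h)
  have hyjP : ∀ j i : Fin n, j ≠ i → y j ∈ P i :=
    fun j i hj => (P i).mul_mem_right _ (hb4 j i hj.symm)
  refine ⟨∑ j ∈ S, y j, Ideal.sum_mem _ (fun j _ => I.mul_mem_right _ (hb2 j)),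
    Submodule.sum_mem _ (fun j _ => hyA j), ?_⟩
  intro i p hp hx
  have hxr : (∑ j ∈ S, y j) - r i ∈ P i := by
    rw [hx, add_sub_cancel_right]; exact hp
  by_cases hri : r i ∈ P i
  · have hiS : i ∈ S := by simp [hS, hri]
    have hsumP : ∑ j ∈ S, y j ∈ P i := by
      have := (P i).add_mem hxr hri
      rwa [sub_add_cancel] at this
    rw [← Finset.add_sum_erase S y hiS] at hsumP
    have hrest : ∑ j ∈ S.erase i, y j ∈ P i :=
      Ideal.sum_mem _ fun j hj => hyjP j i (Finset.mem_erase.mp hj).1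
    have : y i ∈ P i := by
      have := (P i).sub_mem hsumP hrest
      simpa using this
    exact hyiP i this
  · have hsumP : ∑ j ∈ S, y j ∈ P i :=
      Ideal.sum_mem _ fun j hj => hyjP j i (by
        rintro rfl
        exact hri (Finset.mem_filter.mp hj).2)
    have : r i ∈ P i := by
      have := (P i).sub_mem hsumP hxr
      simpa using this
    exact hri this
end

section
/- Let A be a Prüfer domain with quotient field F, let t ∈ F be nonzero, and let d be a positive integer. Then (A + tA)^d = A + t^d A as fractional A-submodules of F. -/
/-- Key ideal-theoretic fact in a Prüfer domain: `a^i b^(d-i) ∈ (a^d, b^d)` for `i ≤ d`. -/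
theorem prufer_aux_ideal
    {A F : Type*} [CommRing A] [IsDomain A] [Field F] [Algebra A F] [IsFractionRing A F]
    (hPrufer : ∀ P : Ideal A, P.IsPrime → ∀ x : F, x ≠ 0 →
      (∃ a s : A, s ∉ P ∧ x * algebraMap A F s = algebraMap A F a) ∨
      (∃ a s : A, s ∉ P ∧ x⁻¹ * algebraMap A F s = algebraMap A F a))
    (a b : A) (ha : a ≠ 0) (hb : b ≠ 0) (d i : ℕ) (hi : i ≤ d) :
    a ^ i * b ^ (d - i) ∈ Ideal.span ({a ^ d, b ^ d} : Set A) := by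
  by_contra hx
  set I : Ideal A := Ideal.span ({a ^ d, b ^ d} : Set A) with hI
  set J : Ideal A := I.colon (Ideal.span {a ^ i * b ^ (d - i)}) with hJdef
  have hJ : J ≠ ⊤ := by
    intro h
    exact hx (by simpa using Ideal.mem_colon_span_singleton.mp (h ▸ Submodule.mem_top : (1 : A) ∈ J))
  obtain ⟨P, hPmax, hJP⟩ := J.exists_le_maximal hJ
  have hinj : Function.Injective (algebraMap A F) := IsFractionRing.injective A F
  have haF : algebraMap A F a ≠ 0 := fun h => ha (hinj (by simpa using h))
  have hbF : algebraMap A F b ≠ 0 := fun h => hb (hinj (by simpa using h))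
  set x : F := algebraMap A F a / algebraMap A F b with hxdef
  have hx0 : x ≠ 0 := div_ne_zero haF hbF
  rcases hPrufer P hPmax.isPrime x hx0 with ⟨c, s, hs, h⟩ | ⟨c, s, hs, h⟩
  · -- a * s = c * b
    have hA : a * s = c * b := by
      apply hinj
      have : algebraMap A F a / algebraMap A F b * algebraMap A F s = algebraMap A F c := h
      field_simp at this
      rw [map_mul, map_mul]; linear_combination this
    have : s ^ i ∈ J := by
      rw [hJdef, Ideal.mem_colon_span_singleton]
      have : s ^ i * (a ^ i * b ^ (d - i)) = c ^ i * b ^ i * b ^ (d - i) := by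
        rw [show s ^ i * (a ^ i * b ^ (d - i)) = (a * s) ^ i * b ^ (d - i) by ring, hA]; ring
      rw [this, mul_assoc, ← pow_add, Nat.add_sub_cancel' hi]
      exact Ideal.mul_mem_left _ _ (Ideal.subset_span (by simp))
    exact hs (hPmax.isPrime.mem_of_pow_mem _ (hJP this))
  · -- b * s = c * a
    have hA : b * s = c * a := by
      apply hinj
      have hxi : x⁻¹ = algebraMap A F b / algebraMap A F a := by
        rw [hxdef, inv_div]
      rw [hxi] at h
      field_simp at h
      rw [map_mul, map_mul]; linear_combination h
    have : s ^ (d - i) ∈ J := by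
      rw [hJdef, Ideal.mem_colon_span_singleton]
      have : s ^ (d - i) * (a ^ i * b ^ (d - i)) = c ^ (d - i) * a ^ (d - i) * a ^ i := by
        rw [show s ^ (d - i) * (a ^ i * b ^ (d - i)) = (b * s) ^ (d - i) * a ^ i by ring, hA]
        ring
      rw [this, mul_assoc, ← pow_add, Nat.sub_add_cancel hi]
      exact Ideal.mul_mem_left _ _ (Ideal.subset_span (by simp))
    exact hs (hPmax.isPrime.mem_of_pow_mem _ (hJP this))

/-- Membership lemma: `t^i ∈ A + t^d A` for `i ≤ d`. -/
theorem prufer_aux_mem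
    {A F : Type*} [CommRing A] [IsDomain A] [Field F] [Algebra A F] [IsFractionRing A F]
    (hPrufer : ∀ P : Ideal A, P.IsPrime → ∀ x : F, x ≠ 0 →
      (∃ a s : A, s ∉ P ∧ x * algebraMap A F s = algebraMap A F a) ∨
      (∃ a s : A, s ∉ P ∧ x⁻¹ * algebraMap A F s = algebraMap A F a))
    (t : F) (ht : t ≠ 0) (d i : ℕ) (hi : i ≤ d) :
    t ^ i ∈ Submodule.span A ({1, t ^ d} : Set F) := by
  obtain ⟨a, b, hbnz, hab⟩ := IsFractionRing.div_surjective (A := A) t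
  have hinj : Function.Injective (algebraMap A F) := IsFractionRing.injective A F
  have hb : b ≠ 0 := nonZeroDivisors.ne_zero hbnz
  have hbF : algebraMap A F b ≠ 0 := fun h => hb (hinj (by simpa using h))
  have haF : algebraMap A F a ≠ 0 := by
    intro h
    rw [← hab, h, zero_div] at ht
    exact ht rfl
  have ha : a ≠ 0 := fun h => haF (by simp [h])
  obtain ⟨c₁, c₂, hc⟩ := Ideal.mem_span_pair.mp
    (prufer_aux_ideal hPrufer a b ha hb d i hi)
  have key : t ^ i = c₂ • (1 : F) + c₁ • t ^ d := by
    have hcF := congrArg (algebraMap A F) hc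
    push_cast [map_add, map_mul, map_pow] at hcF
    rw [← hab]
    rw [div_pow, div_pow]
    rw [Algebra.smul_def, Algebra.smul_def, mul_one]
    field_simp
    rw [show algebraMap A F a ^ i * algebraMap A F b ^ d
        = algebraMap A F a ^ i * algebraMap A F b ^ (d - i) * algebraMap A F b ^ i by
      rw [mul_assoc, ← pow_add, Nat.sub_add_cancel hi], ← hcF]
    ring
  rw [key]
  exact Submodule.add_mem _
    (Submodule.smul_mem _ _ (Submodule.subset_span (by simp)))
    (Submodule.smul_mem _ _ (Submodule.subset_span (by simp)))

/-- In a Prüfer domain `A` with quotient field `F` (every localization at a prime is a valuation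
ring of `F`), `(A + tA)^d = A + t^d A` for each nonzero `t ∈ F` and positive integer `d`. -/
theorem prufer_pow_span_one_t
    {A F : Type*} [CommRing A] [IsDomain A] [Field F] [Algebra A F] [IsFractionRing A F]
    (hPrufer : ∀ P : Ideal A, P.IsPrime → ∀ x : F, x ≠ 0 →
      (∃ a s : A, s ∉ P ∧ x * algebraMap A F s = algebraMap A F a) ∨
      (∃ a s : A, s ∉ P ∧ x⁻¹ * algebraMap A F s = algebraMap A F a))
    (t : F) (ht : t ≠ 0) (d : ℕ) (hd : 0 < d) :
    (Submodule.span A ({1, t} : Set F)) ^ d = Submodule.span A ({1, t ^ d} : Set F) := by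
  induction d with
  | zero => exact absurd hd (lt_irrefl 0)
  | succ n ih =>
    rcases Nat.eq_zero_or_pos n with hn | hn
    · subst hn; simp
    · rw [pow_succ, ih hn]
      apply le_antisymm
      · rw [Submodule.span_mul_span]
        rw [Submodule.span_le]
        rintro x hx
        rw [Set.mem_mul] at hx
        obtain ⟨p, hp, q, hq, rfl⟩ := hx
        have hmem : ∀ i ≤ n + 1, t ^ i ∈ Submodule.span A ({1, t ^ (n + 1)} : Set F) :=
          fun i hi => prufer_aux_mem hPrufer t ht (n + 1) i hi
        rcases hp with rfl | rfl <;> rcases hq with rfl | rfl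
        · simpa using hmem 0 (by omega)
        · simpa using hmem 1 (by omega)
        · simpa using hmem n (by omega)
        · simpa [← pow_succ] using hmem (n + 1) (by omega)
      · rw [Submodule.span_le]
        rintro x hx
        rcases hx with rfl | rfl
        · simpa using Submodule.mul_mem_mul
            (Submodule.subset_span (Set.mem_insert 1 {t ^ n}))
            (Submodule.subset_span (Set.mem_insert 1 {t}))
        · rw [pow_succ]
          exact Submodule.mul_mem_mul
            (Submodule.subset_span (Set.mem_insert_iff.mpr (Or.inr rfl)))
            (Submodule.subset_span (Set.mem_insert_iff.mpr (Or.inr rfl)))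
end

section
/- Let F be a field, Z a set of valuation rings of F, and A = ⋂_{V ∈ Z} V. Suppose f(T) ∈ A[T] is a monic polynomial of positive degree such that 1/f(t) ∈ A for every t ∈ F (in particular f(t) ≠ 0 for all t ∈ F). Then A is a Prüfer domain with quotient field F. -/
private lemma gilmer_pow_helper {F : Type*} [Field F] (t : F) (ht : t ≠ 0) {i n : ℕ}
    (hin : i ≤ n) : t ^ n * t⁻¹ ^ (n - i) = t ^ i := by
  rw [inv_pow, ← pow_sub₀ t ht (Nat.sub_le n i), Nat.sub_sub_self hin]

/-- Gilmer: if `A` is an intersection of valuation rings of `F` and `f ∈ A[T]` is a monic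
polynomial of positive degree with `1/f(t) ∈ A` for every `t ∈ F` (in particular `f(t) ≠ 0`),
then `A` is a Prüfer domain with quotient field `F`. -/
theorem gilmer_holomorphy_ring_isPrufer
    {F : Type*} [Field F] (Z : Set (Subring F)) (hZ : ∀ V ∈ Z, IsValSubring V)
    (A : Subring F) (hA : ∀ x : F, x ∈ A ↔ ∀ V ∈ Z, x ∈ V)
    (f : Polynomial A) (hmonic : f.Monic) (hdeg : 0 < f.natDegree)
    (h : ∀ t : F, Polynomial.eval₂ A.subtype t f ≠ 0 ∧
      (Polynomial.eval₂ A.subtype t f)⁻¹ ∈ A) :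
    IsPruferQF A := by
  classical
  set n := f.natDegree with hn
  have hA' : ∀ x : F, x ∈ A → ∀ V ∈ Z, x ∈ V := fun x hx => (hA x).1 hx
  -- the key lemma: `t^k / f(t) ∈ A` for all `k ≤ n`
  have key : ∀ t : F, ∀ k : ℕ, k ≤ n →
      t ^ k * (Polynomial.eval₂ A.subtype t f)⁻¹ ∈ A := by
    intro t k hk
    rcases eq_or_ne t 0 with rfl | ht0
    · rcases Nat.eq_zero_or_pos k with rfl | hkpos
      · simpa using (h 0).2
      · simpa [zero_pow hkpos.ne'] using zero_mem A
    rw [hA]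
    intro V hV
    have hinv : (Polynomial.eval₂ A.subtype t f)⁻¹ ∈ V := hA' _ (h t).2 V hV
    by_cases htV : t ∈ V
    · exact mul_mem (pow_mem htV k) hinv
    have hs : t⁻¹ ∈ V := (hZ V hV t ht0).resolve_left htV
    set c : F := ∑ i ∈ Finset.range n, ((f.coeff i : F)) * t⁻¹ ^ (n - 1 - i) with hc_def
    have hcV : c ∈ V := by
      refine sum_mem fun i hi => mul_mem ?_ (pow_mem hs _)
      exact hA' _ (f.coeff i).2 V hV
    -- `f(t) = t^n (1 + t⁻¹ c)`
    have hft : Polynomial.eval₂ A.subtype t f = t ^ n * (1 + t⁻¹ * c) := by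
      rw [Polynomial.eval₂_eq_sum_range, ← hn, Finset.sum_range_succ]
      have h1 : A.subtype (f.coeff n) = 1 := by
        rw [hn, hmonic.coeff_natDegree]; exact map_one _
      rw [h1, one_mul, mul_add, mul_one, hc_def, Finset.mul_sum, Finset.mul_sum]
      rw [add_comm (t ^ n)]
      congr 1
      refine Finset.sum_congr rfl fun i hi => ?_
      have hin : i < n := Finset.mem_range.mp hi
      have hp1 : t⁻¹ * ((f.coeff i : F) * t⁻¹ ^ (n - 1 - i))
          = (f.coeff i : F) * t⁻¹ ^ (n - i) := by
        rw [show t⁻¹ * ((f.coeff i : F) * t⁻¹ ^ (n - 1 - i))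
            = (f.coeff i : F) * (t⁻¹ * t⁻¹ ^ (n - 1 - i)) from by ring, ← pow_succ']
        congr 2
        omega
      rw [hp1, show t ^ n * ((f.coeff i : F) * t⁻¹ ^ (n - i))
          = (f.coeff i : F) * (t ^ n * t⁻¹ ^ (n - i)) from by ring,
        gilmer_pow_helper t ht0 hin.le]
      rfl
    have hq0 : (1 : F) + t⁻¹ * c ≠ 0 := by
      intro hq
      apply (h t).1
      rw [hft, hq, mul_zero]
    -- `(1 + t⁻¹ c)⁻¹ ∈ V`
    have hqinv : ((1 : F) + t⁻¹ * c)⁻¹ ∈ V := by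
      by_cases hsc : t⁻¹ * c = 0
      · rw [hsc, add_zero, inv_one]; exact one_mem V
      have hz0 : t⁻¹ * c * ((1 : F) + t⁻¹ * c)⁻¹ ≠ 0 :=
        mul_ne_zero hsc (inv_ne_zero hq0)
      rcases hZ V hV _ hz0 with hzV | hzV
      · have htc : t + c ≠ 0 := by
          have h2 : t + c = t * ((1 : F) + t⁻¹ * c) := by field_simp
          rw [h2]
          exact mul_ne_zero ht0 hq0
        have e : ((1 : F) + t⁻¹ * c)⁻¹ = 1 - t⁻¹ * c * ((1 : F) + t⁻¹ * c)⁻¹ := by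
          field_simp
          ring
        rw [e]; exact sub_mem (one_mem V) hzV
      · exfalso
        apply htV
        have hc0 : c ≠ 0 := fun hc => hsc (by rw [hc, mul_zero])
        have e : t = (t⁻¹ * c * ((1 : F) + t⁻¹ * c)⁻¹)⁻¹ * c - c := by
          field_simp
          ring
        rw [e]; exact sub_mem (mul_mem hzV hcV) hcV
    have efin : t ^ k * (Polynomial.eval₂ A.subtype t f)⁻¹
        = t⁻¹ ^ (n - k) * ((1 : F) + t⁻¹ * c)⁻¹ := by
      rw [hft, mul_inv, show t ^ k * ((t ^ n)⁻¹ * ((1 : F) + t⁻¹ * c)⁻¹)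
          = (t ^ k * (t ^ n)⁻¹) * ((1 : F) + t⁻¹ * c)⁻¹ from by ring]
      congr 1
      rw [← gilmer_pow_helper t ht0 hk, mul_comm (t ^ n), mul_assoc,
        mul_inv_cancel₀ (pow_ne_zero n ht0), mul_one]
    rw [efin]
    exact mul_mem (pow_mem hs _) hqinv
  -- elements `w t k = t^k / f(t)` of `A`
  let w : F → ℕ → A := fun t k =>
    if hk : k ≤ n then ⟨t ^ k * (Polynomial.eval₂ A.subtype t f)⁻¹, key t k hk⟩ else 0
  have hwcoe : ∀ t : F, ∀ k : ℕ, k ≤ n →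
      ((w t k : A) : F) = t ^ k * (Polynomial.eval₂ A.subtype t f)⁻¹ := by
    intro t k hk
    simp [w, hk]
  constructor
  · -- quotient field
    intro x
    rcases eq_or_ne x 0 with rfl | hx0
    · exact ⟨0, 1, by simp, by simp⟩
    refine ⟨w x 1, w x 0, ?_, ?_⟩
    · rw [hwcoe x 0 (Nat.zero_le n)]
      simpa using inv_ne_zero (h x).1
    · rw [hwcoe x 0 (Nat.zero_le n), hwcoe x 1 hdeg]
      rw [pow_zero, pow_one, one_mul, mul_div_assoc,
        div_self (inv_ne_zero (h x).1), mul_one]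
  · -- Prüfer condition
    intro P hP x hx0
    have hφ0 := (h x).1
    have hsum : ∑ k ∈ Finset.range (n + 1), f.coeff k * w x k = 1 := by
      have hinj : Function.Injective (A.subtype) := Subtype.coe_injective
      apply hinj
      rw [map_sum, map_one]
      have : ∀ k ∈ Finset.range (n + 1),
          A.subtype (f.coeff k * w x k)
            = A.subtype (f.coeff k) * x ^ k * (Polynomial.eval₂ A.subtype x f)⁻¹ := by
        intro k hk
        rw [map_mul]
        rw [show A.subtype (w x k) = ((w x k : A) : F) from rfl,
          hwcoe x k (Nat.lt_succ_iff.mp (Finset.mem_range.mp hk)), mul_assoc]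
      rw [Finset.sum_congr rfl this, ← Finset.sum_mul, ← Polynomial.eval₂_eq_sum_range]
      exact mul_inv_cancel₀ hφ0
    have hex : ∃ k, k ≤ n ∧ w x k ∉ P := by
      by_contra hcon
      push_neg at hcon
      have h1P : (1 : A) ∈ P := by
        rw [← hsum]
        exact Ideal.sum_mem _ fun k hk =>
          Ideal.mul_mem_left _ _ (hcon k (Nat.lt_succ_iff.mp (Finset.mem_range.mp hk)))
      exact hP.ne_top ((Ideal.eq_top_iff_one P).2 h1P)
    obtain ⟨k, hk, hkP⟩ := hex
    have hwne : ((w x k : A) : F) ≠ 0 := by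
      rw [hwcoe x k hk]
      exact mul_ne_zero (pow_ne_zero _ hx0) (inv_ne_zero hφ0)
    rcases lt_or_eq_of_le hk with hkn | hke
    · left
      refine ⟨w x (k + 1), w x k, hkP, ?_⟩
      rw [hwcoe x k hk, hwcoe x (k + 1) hkn, eq_div_iff (by rw [← hwcoe x k hk]; exact hwne)]
      rw [pow_succ]
      ring
    · right
      refine ⟨w x (k - 1), w x k, hkP, ?_⟩
      rw [hwcoe x k hk, hwcoe x (k - 1) (le_trans (Nat.sub_le k 1) hk),
        eq_div_iff (by rw [← hwcoe x k hk]; exact hwne)]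
      have hxk : x ^ k = x * x ^ (k - 1) := by
        rw [← pow_succ']
        congr 1
        omega
      rw [hxk]
      field_simp
end

section
/- Let A be a Prüfer domain with quotient field F, and suppose that for every nonzero t ∈ F there exists a positive integer d such that (A + tA)^d is a principal fractional ideal of A. Then the Picard group of A is torsion; conversely, if the Picard group of A is torsion, then for every nonzero t ∈ F there exists d > 0 such that (A + tA)^d is principal. -/
set_option maxHeartbeats 1000000
set_option linter.unusedSectionVars false

open Submodule

section Aux

variable {A F : Type*} [CommRing A] [IsDomain A] [Field F] [Algebra A F] [IsFractionRing A F]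

private lemma span_singleton_mul' (x y : F) :
    span A ({x} : Set F) * span A {y} = span A {x * y} := by
  rw [span_mul_span, Set.singleton_mul_singleton]

private lemma span_singleton_pow' (x : F) (n : ℕ) :
    (span A ({x} : Set F)) ^ n = span A {x ^ n} := by
  induction n with
  | zero => simp [one_eq_span]
  | succ n ih => rw [pow_succ, ih, span_singleton_mul', ← pow_succ]

private lemma pow_le_pow' {M N : Submodule A F} (h : M ≤ N) (n : ℕ) : M ^ n ≤ N ^ n := by
  induction n with
  | zero => simp
  | succ n ih => rw [pow_succ, pow_succ]; exact mul_le_mul' ih h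

private lemma repl [DecidableEq F] {z1 z2 sF aF : F} (h : sF * z1 = aF * z2) :
    ∀ L : List F, sF ^ (L.count z1) * L.prod
      = aF ^ (L.count z1) * (L.map fun x => if x = z1 then z2 else x).prod := by
  intro L
  induction L with
  | nil => simp
  | cons x xs ih =>
    by_cases hx : x = z1
    · subst hx
      simp only [List.count_cons_self, List.map_cons, List.prod_cons, eq_self_iff_true, if_true]
      linear_combination sF * x * ih +
        aF ^ (xs.count x) * (List.prod (xs.map fun y => if y = x then z2 else y)) * h
    · have hcount : (x :: xs).count z1 = xs.count z1 :=
        List.count_cons_of_ne hx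
      simp only [hcount, List.map_cons, List.prod_cons, if_neg hx]
      linear_combination x * ih

private lemma monomial_mem [DecidableEq F]
    (hP : ∀ P : Ideal A, P.IsPrime → ∀ x : F, x ≠ 0 →
      (∃ a s : A, s ∉ P ∧ x * algebraMap A F s = algebraMap A F a) ∨
      (∃ a s : A, s ∉ P ∧ x⁻¹ * algebraMap A F s = algebraMap A F a)) :
    ∀ (n : ℕ) (L : List F), L.toFinset.card ≤ n → L ≠ [] →
      L.prod ∈ span A ((fun x => x ^ L.length) '' {x | x ∈ L}) := by
  intro n
  induction n with
  | zero =>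
    intro L hc hne
    obtain ⟨z, hz⟩ := List.exists_mem_of_ne_nil L hne
    have := Finset.card_pos.mpr ⟨z, List.mem_toFinset.mpr hz⟩
    omega
  | succ n ih =>
    intro L hc hne
    by_cases hall : ∀ x ∈ L, ∀ y ∈ L, x = y
    · obtain ⟨z, hz⟩ := List.exists_mem_of_ne_nil L hne
      rw [List.prod_eq_pow_card L z (fun x hx => hall x hx z hz)]
      exact subset_span ⟨z, hz, rfl⟩
    · push_neg at hall
      obtain ⟨z1, hz1, z2, hz2, h12⟩ := hall
      by_cases h10 : z1 = 0
      · rw [List.prod_eq_zero (h10 ▸ hz1)]; exact zero_mem _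
      by_cases h20 : z2 = 0
      · rw [List.prod_eq_zero (h20 ▸ hz2)]; exact zero_mem _
      have core : ∀ w1 w2 : F, w1 ∈ L → w2 ∈ L → w1 ≠ w2 → ∀ s a : A,
          algebraMap A F s * w1 = algebraMap A F a * w2 →
          (algebraMap A F s) ^ (L.count w1) * L.prod ∈
            span A ((fun x => x ^ L.length) '' {x | x ∈ L}) := by
        intro w1 w2 hw1 hw2 hw12 s a hsa
        set f : F → F := fun x => if x = w1 then w2 else x with hf
        set L' := L.map f with hL'
        have hlen : L'.length = L.length := List.length_map _
        have hmemsub : {x | x ∈ L'} ⊆ {x | x ∈ L} := by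
          intro x hx
          obtain ⟨y, hy, rfl⟩ := List.mem_map.mp hx
          by_cases hy1 : y = w1
          · simpa [hf, hy1] using hw2
          · simpa [hf, hy1] using hy
        have hsub : L'.toFinset ⊆ L.toFinset.erase w1 := by
          intro x hx
          rw [List.mem_toFinset] at hx
          obtain ⟨y, hy, rfl⟩ := List.mem_map.mp hx
          by_cases hy1 : y = w1
          · simp only [hf, hy1, if_pos rfl]
            exact Finset.mem_erase.mpr ⟨Ne.symm hw12, List.mem_toFinset.mpr hw2⟩
          · simp only [hf, if_neg hy1]
            exact Finset.mem_erase.mpr ⟨hy1, List.mem_toFinset.mpr hy⟩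
        have hcard : L'.toFinset.card ≤ n := by
          have h1 := Finset.card_le_card hsub
          have h2 := Finset.card_erase_of_mem (List.mem_toFinset.mpr hw1)
          omega
        have hne' : L' ≠ [] := by
          intro h
          have hl := congrArg List.length h
          rw [hlen] at hl
          exact hne (List.length_eq_zero_iff.mp hl)
        have hIH := ih L' hcard hne'
        rw [hlen] at hIH
        have hIH' : L'.prod ∈ span A ((fun x => x ^ L.length) '' {x | x ∈ L}) :=
          span_mono (Set.image_mono hmemsub) hIH
        rw [repl hsa L]
        have hsm : (a ^ (L.count w1)) • L'.prod ∈
            span A ((fun x => x ^ L.length) '' {x | x ∈ L}) :=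
          Submodule.smul_mem _ _ hIH'
        rwa [Algebra.smul_def, map_pow] at hsm
      by_contra hmem
      set C : Ideal A :=
        Submodule.comap (LinearMap.toSpanSingleton A F L.prod)
          (span A ((fun x => x ^ L.length) '' {x | x ∈ L})) with hCdef
      have hCt : C ≠ ⊤ := by
        intro h
        apply hmem
        have h1 : (1 : A) ∈ C := h ▸ Submodule.mem_top
        simpa [hCdef, LinearMap.toSpanSingleton_apply] using h1
      obtain ⟨P, hPm, hCP⟩ := Ideal.exists_le_maximal C hCt
      have ht : z1 / z2 ≠ 0 := div_ne_zero h10 h20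
      rcases hP P hPm.isPrime _ ht with ⟨a, s, hs, he⟩ | ⟨a, s, hs, he⟩
      · have he' : algebraMap A F s * z1 = algebraMap A F a * z2 := by
          field_simp at he
          linear_combination he
        have hk := core z1 z2 hz1 hz2 h12 s a he'
        have hsC : s ^ (L.count z1) ∈ C := by
          simpa [hCdef, LinearMap.toSpanSingleton_apply, Algebra.smul_def, map_pow] using hk
        exact hs (hPm.isPrime.mem_of_pow_mem _ (hCP hsC))
      · have he' : algebraMap A F s * z2 = algebraMap A F a * z1 := by
          rw [inv_div] at he
          field_simp at he
          linear_combination he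
        have hk := core z2 z1 hz2 hz1 (Ne.symm h12) s a he'
        have hsC : s ^ (L.count z2) ∈ C := by
          simpa [hCdef, LinearMap.toSpanSingleton_apply, Algebra.smul_def, map_pow] using hk
        exact hs (hPm.isPrime.mem_of_pow_mem _ (hCP hsC))

private lemma span_pow_le [DecidableEq F]
    (hP : ∀ P : Ideal A, P.IsPrime → ∀ x : F, x ≠ 0 →
      (∃ a s : A, s ∉ P ∧ x * algebraMap A F s = algebraMap A F a) ∨
      (∃ a s : A, s ∉ P ∧ x⁻¹ * algebraMap A F s = algebraMap A F a))
    (S : Set F) (e : ℕ) (he : 0 < e) :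
    (span A S) ^ e ≤ span A ((fun x => x ^ e) '' S) := by
  rw [span_pow]
  apply span_le.mpr
  intro x hx
  rw [Set.mem_pow] at hx
  obtain ⟨f, hf⟩ := hx
  have hne : (List.ofFn fun i => (f i : F)) ≠ [] := by
    simp only [ne_eq, List.ofFn_eq_nil_iff]
    omega
  have hm := monomial_mem hP (List.ofFn fun i => (f i : F)).toFinset.card _ le_rfl hne
  rw [List.length_ofFn] at hm
  rw [← hf]
  refine span_mono (Set.image_mono ?_) hm
  intro y hy
  obtain ⟨i, hi⟩ := List.mem_ofFn.mp hy
  rw [← hi]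
  exact (f i).2

private lemma main_fin [DecidableEq F]
    (hP : ∀ P : Ideal A, P.IsPrime → ∀ x : F, x ≠ 0 →
      (∃ a s : A, s ∉ P ∧ x * algebraMap A F s = algebraMap A F a) ∨
      (∃ a s : A, s ∉ P ∧ x⁻¹ * algebraMap A F s = algebraMap A F a))
    (H : ∀ t : F, t ≠ 0 → ∃ d : ℕ, 0 < d ∧ ∃ u : F,
        (span A ({1, t} : Set F)) ^ d = span A {u}) :
    ∀ s : Finset F, span A (↑s : Set F) ≠ ⊥ →
      ∃ d : ℕ, 0 < d ∧ ∃ u : F, u ≠ 0 ∧ (span A (↑s : Set F)) ^ d = span A {u} := by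
  intro s
  induction s using Finset.induction_on with
  | empty => intro h; simp at h
  | @insert a s' ha ih =>
    intro hbot
    rw [Finset.coe_insert] at hbot ⊢
    by_cases ha0 : a = 0
    · rw [ha0, span_insert_eq_span (zero_mem _)] at hbot ⊢
      exact ih hbot
    by_cases hs'bot : span A (↑s' : Set F) = ⊥
    · have hspan : span A (insert a (↑s' : Set F)) = span A {a} := by
        rw [span_insert, hs'bot, sup_bot_eq]
      exact ⟨1, one_pos, a, ha0, by rw [pow_one, hspan]⟩
    obtain ⟨e, he, v, hv, hev⟩ := ih hs'bot
    have hNe : (span A (insert a (↑s' : Set F))) ^ e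
        = span A ({v} : Set F) ⊔ span A {a ^ e} := by
      apply le_antisymm
      · refine le_trans (span_pow_le hP _ e he) ?_
        rw [span_le]
        rintro _ ⟨y, hy, rfl⟩
        rcases hy with rfl | hy
        · exact Submodule.mem_sup_right (subset_span rfl)
        · have hym : y ^ e ∈ (span A (↑s' : Set F)) ^ e :=
            Submodule.pow_mem_pow _ (subset_span hy) e
          rw [hev] at hym
          exact Submodule.mem_sup_left hym
      · refine sup_le ?_ ?_
        · rw [← hev]
          exact pow_le_pow' (span_mono (Set.subset_insert _ _)) e
        · exact (span_singleton_le_iff_mem _ _).mpr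
            (Submodule.pow_mem_pow _ (subset_span (Set.mem_insert a _)) e)
    have hae : a ^ e ≠ 0 := pow_ne_zero _ ha0
    set t := a ^ e / v with htdef
    have htne : t ≠ 0 := div_ne_zero hae hv
    obtain ⟨d, hd, u', hu'⟩ := H t htne
    have hu'0 : u' ≠ 0 := by
      intro h
      have h1 : (1 : F) ∈ (span A ({1, t} : Set F)) ^ d := by
        simpa using Submodule.pow_mem_pow _ (subset_span (Set.mem_insert 1 {t})) d
      rw [hu', h, Submodule.span_zero_singleton] at h1
      exact one_ne_zero ((Submodule.mem_bot A).mp h1)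
    have hvt : v * t = a ^ e := by
      rw [htdef, mul_div_cancel₀ _ hv]
    have hsplit : span A ({v, a ^ e} : Set F)
        = span A ({v} : Set F) * span A ({1, t} : Set F) := by
      rw [span_mul_span, Set.singleton_mul, Set.image_pair, mul_one, hvt]
    have hNed : (span A (insert a (↑s' : Set F))) ^ (e * d)
        = span A {v ^ d * u'} := by
      rw [pow_mul, hNe, show span A ({v} : Set F) ⊔ span A {a ^ e}
            = span A ({v, a ^ e} : Set F) from (span_insert v {a ^ e}).symm,
        hsplit, mul_pow, hu', span_singleton_pow', span_singleton_mul']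
    exact ⟨e * d, Nat.mul_pos he hd, v ^ d * u',
      mul_ne_zero (pow_ne_zero _ hv) hu'0, hNed⟩

end Aux

/-- For a Prüfer domain `A` with quotient field `F`: the Picard group of `A` is torsion if and
only if for every nonzero `t ∈ F` some power `(A + tA)^d` (`d > 0`) is principal. -/
theorem prufer_torsion_picard_iff
    {A F : Type*} [CommRing A] [IsDomain A] [Field F] [Algebra A F] [IsFractionRing A F]
    (hPrufer : ∀ P : Ideal A, P.IsPrime → ∀ x : F, x ≠ 0 →
      (∃ a s : A, s ∉ P ∧ x * algebraMap A F s = algebraMap A F a) ∨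
      (∃ a s : A, s ∉ P ∧ x⁻¹ * algebraMap A F s = algebraMap A F a)) :
    (∀ t : F, t ≠ 0 → ∃ d : ℕ, 0 < d ∧ ∃ u : F,
        (Submodule.span A ({1, t} : Set F)) ^ d = Submodule.span A ({u} : Set F)) ↔
    (∀ J : (FractionalIdeal (nonZeroDivisors A) F)ˣ, ∃ n : ℕ, 0 < n ∧ ∃ u : F,
        (J : FractionalIdeal (nonZeroDivisors A) F) ^ n =
          FractionalIdeal.spanSingleton (nonZeroDivisors A) u) := by
  classical
  constructor
  · intro H J
    obtain ⟨s, hs⟩ := FractionalIdeal.fg_unit J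
    have hbot : span A (↑s : Set F) ≠ ⊥ := by
      intro hb
      rw [hs] at hb
      exact Units.ne_zero J (FractionalIdeal.coeToSubmodule_eq_bot.mp hb)
    obtain ⟨d, hd, u, hu0, hpow⟩ := main_fin hPrufer H s hbot
    refine ⟨d, hd, u, ?_⟩
    rw [← FractionalIdeal.coeToSubmodule_inj, FractionalIdeal.coe_pow, ← hs, hpow,
      FractionalIdeal.coe_spanSingleton]
  · intro hU t ht
    set I : FractionalIdeal (nonZeroDivisors A) F :=
      FractionalIdeal.spanSingleton _ 1 + FractionalIdeal.spanSingleton _ t with hI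
    have hcoe : (I : Submodule A F) = span A ({1, t} : Set F) := by
      rw [hI, FractionalIdeal.coe_add, FractionalIdeal.coe_spanSingleton,
        FractionalIdeal.coe_spanSingleton, Submodule.add_eq_sup, ← span_insert]
    have h1I : (1 : F) ∈ I :=
      FractionalIdeal.mem_coe.mp (hcoe ▸ subset_span (Set.mem_insert 1 {t}))
    have htI : t ∈ I :=
      FractionalIdeal.mem_coe.mp (hcoe ▸ subset_span (Set.mem_insert_of_mem 1 rfl))
    have hIne : I ≠ 0 := by
      intro h
      rw [h] at h1I
      simpa using h1I
    have hmul : I * (1 / I) = 1 := by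
      refine le_antisymm FractionalIdeal.mul_one_div_le_one ?_
      suffices h1 : (1 : F) ∈ I * (1 / I) by
        rw [← FractionalIdeal.coe_le_coe, FractionalIdeal.coe_one, Submodule.one_eq_span]
        exact (span_singleton_le_iff_mem _ _).mpr (FractionalIdeal.mem_coe.mpr h1)
      by_contra hmem
      set C : Ideal A :=
        Submodule.comap (Algebra.linearMap A F)
          ((I * (1 / I) : FractionalIdeal _ F) : Submodule A F) with hCdef
      have hCt : C ≠ ⊤ := by
        intro h
        apply hmem
        have h1 : (1 : A) ∈ C := h ▸ Submodule.mem_top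
        have := h1
        rw [hCdef, Submodule.mem_comap, Algebra.linearMap_apply, map_one] at this
        exact FractionalIdeal.mem_coe.mp this
      obtain ⟨P, hPm, hCP⟩ := Ideal.exists_le_maximal C hCt
      rcases hPrufer P hPm.isPrime t ht with ⟨a, s, hs, he⟩ | ⟨a, s, hs, he⟩
      · have hsdiv : algebraMap A F s ∈ 1 / I := by
          rw [FractionalIdeal.mem_div_iff_of_ne_zero hIne]
          intro y hy
          have hy' : y ∈ (I : Submodule A F) := FractionalIdeal.mem_coe.mpr hy
          rw [hcoe, mem_span_pair] at hy'
          obtain ⟨b, c, rfl⟩ := hy'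
          rw [FractionalIdeal.mem_one_iff]
          refine ⟨b * s + c * a, ?_⟩
          simp only [map_add, map_mul, Algebra.smul_def, mul_one]
          linear_combination (algebraMap A F c) * he.symm
        have hsK : algebraMap A F s ∈ I * (1 / I) := by
          have hmm := FractionalIdeal.mul_mem_mul h1I hsdiv
          rwa [one_mul] at hmm
        have hsC : s ∈ C := by
          rw [hCdef, Submodule.mem_comap, Algebra.linearMap_apply]
          exact FractionalIdeal.mem_coe.mpr hsK
        exact hs (hCP hsC)
      · have hat : algebraMap A F a * t = algebraMap A F s := by
          rw [← he]
          field_simp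
        have hadiv : algebraMap A F a ∈ 1 / I := by
          rw [FractionalIdeal.mem_div_iff_of_ne_zero hIne]
          intro y hy
          have hy' : y ∈ (I : Submodule A F) := FractionalIdeal.mem_coe.mpr hy
          rw [hcoe, mem_span_pair] at hy'
          obtain ⟨b, c, rfl⟩ := hy'
          rw [FractionalIdeal.mem_one_iff]
          refine ⟨b * a + c * s, ?_⟩
          simp only [map_add, map_mul, Algebra.smul_def, mul_one]
          linear_combination (algebraMap A F c) * hat.symm
        have hsK : algebraMap A F s ∈ I * (1 / I) := by
          have hmm := FractionalIdeal.mul_mem_mul htI hadiv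
          rw [mul_comm t (algebraMap A F a), hat] at hmm
          exact hmm
        have hsC : s ∈ C := by
          rw [hCdef, Submodule.mem_comap, Algebra.linearMap_apply]
          exact FractionalIdeal.mem_coe.mpr hsK
        exact hs (hCP hsC)
    have hmul' : (1 / I) * I = 1 := by rw [mul_comm]; exact hmul
    let U : (FractionalIdeal (nonZeroDivisors A) F)ˣ := ⟨I, 1 / I, hmul, hmul'⟩
    obtain ⟨n, hn, u, hu⟩ := hU U
    refine ⟨n, hn, u, ?_⟩
    have hce := congrArg FractionalIdeal.coeToSubmodule hu
    rw [FractionalIdeal.coe_pow, FractionalIdeal.coe_spanSingleton] at hce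
    have hUI : ((U : FractionalIdeal (nonZeroDivisors A) F) : Submodule A F)
        = (I : Submodule A F) := rfl
    rw [hUI, hcoe] at hce
    exact hce
end

section
/- Let F be a field and let Z be a finite set of valuation rings of F with A = ⋂_{V ∈ Z} V. Then A is a Bézout domain with quotient field F, i.e., every finitely generated ideal of A is principal. -/
namespace BezAux

variable {F : Type*} [Field F]

/-- `x` is a nonunit of `V` (lies in the maximal ideal). -/
def Small (V : Subring F) (x : F) : Prop := x ∈ V ∧ (x = 0 ∨ x⁻¹ ∉ V)

/-- `x` is a unit of `V`. -/
def Unit' (V : Subring F) (x : F) : Prop := x ∈ V ∧ x⁻¹ ∈ V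

lemma small_mul {V : Subring F} {x y : F} (hx : Small V x) (hy : y ∈ V) :
    Small V (x * y) := by
  refine ⟨V.mul_mem hx.1 hy, ?_⟩
  by_cases h0 : x * y = 0
  · exact Or.inl h0
  · have hx0 : x ≠ 0 := fun h => h0 (by simp [h])
    have hy0 : y ≠ 0 := fun h => h0 (by simp [h])
    refine Or.inr fun hmem => (hx.2.resolve_left hx0) ?_
    have e : x⁻¹ = y * (x * y)⁻¹ := by
      rw [mul_inv]
      field_simp
    rw [e]; exact V.mul_mem hy hmem

lemma small_neg {V : Subring F} {x : F} (hx : Small V x) : Small V (-x) := by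
  refine ⟨V.neg_mem hx.1, ?_⟩
  rcases hx.2 with h | h
  · exact Or.inl (by simp [h])
  · exact Or.inr (by rw [inv_neg]; exact fun hm => h (by simpa using V.neg_mem hm))

lemma small_add {V : Subring F} (hV : IsValSubring V) {x y : F}
    (hx : Small V x) (hy : Small V y) : Small V (x + y) := by
  by_cases hx0 : x = 0
  · simpa [hx0] using hy
  by_cases hy0 : y = 0
  · simpa [hy0] using hx
  rcases hV (x * y⁻¹) (by simp [hx0, hy0]) with h | h
  · have e : x + y = y * (1 + x * y⁻¹) := by field_simp; ring
    rw [e]; exact small_mul hy (V.add_mem V.one_mem h)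
  · rw [mul_inv, inv_inv, mul_comm] at h
    have e : x + y = x * (1 + y * x⁻¹) := by field_simp; try ring
    rw [e]; exact small_mul hx (V.add_mem V.one_mem h)

lemma small_sub {V : Subring F} (hV : IsValSubring V) {x y : F}
    (hx : Small V x) (hy : Small V y) : Small V (x - y) := by
  rw [sub_eq_add_neg]; exact small_add hV hx (small_neg hy)

lemma small_pow {V : Subring F} {x : F} (hx : Small V x) {n : ℕ} (hn : 1 ≤ n) :
    Small V (x ^ n) := by
  induction n with
  | zero => omega
  | succ k ih =>
    by_cases hk : 1 ≤ k
    · rw [pow_succ, mul_comm]; exact small_mul hx (V.pow_mem hx.1 k)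
    · have : k = 0 := by omega
      simpa [this] using hx

lemma one_add_small {V : Subring F} (hV : IsValSubring V) {x : F} (hx : Small V x) :
    Unit' V (1 + x) ∧ 1 + x ≠ 0 := by
  have hmem : (1 : F) + x ∈ V := V.add_mem V.one_mem hx.1
  by_cases hx0 : x = 0
  · refine ⟨⟨hmem, ?_⟩, by simp [hx0]⟩
    simpa [hx0] using V.one_mem
  · have hxi : x⁻¹ ∉ V := hx.2.resolve_left hx0
    have hne : 1 + x ≠ 0 := by
      intro h
      have hx1 : x = -1 := by linear_combination h
      refine hxi ?_
      rw [hx1, show ((-1:F))⁻¹ = -1 from by norm_num]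
      exact V.neg_mem V.one_mem
    refine ⟨⟨hmem, ?_⟩, hne⟩
    rcases hV (x * (1 + x)⁻¹) (by simp [hx0, hne]) with h | h
    · have e : (1 + x)⁻¹ = 1 - x * (1 + x)⁻¹ := by field_simp; ring
      rw [e]; exact V.sub_mem V.one_mem h
    · exfalso; apply hxi
      rw [mul_inv, inv_inv, mul_comm] at h
      have e : x⁻¹ = (1 + x) * x⁻¹ - 1 := by field_simp; ring
      rw [e]; exact V.sub_mem h V.one_mem

lemma unit_pow {V : Subring F} {x : F} (hx : Unit' V x) (n : ℕ) : Unit' V (x ^ n) :=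
  ⟨V.pow_mem hx.1 n, by rw [← inv_pow]; exact V.pow_mem hx.2 n⟩

lemma unit_of_not_small {V : Subring F} {x : F} (hmem : x ∈ V) (h : ¬ Small V x) :
    Unit' V x ∧ x ≠ 0 := by
  by_cases hx0 : x = 0
  · exact absurd ⟨hmem, Or.inl hx0⟩ h
  · by_cases hxi : x⁻¹ ∈ V
    · exact ⟨⟨hmem, hxi⟩, hx0⟩
    · exact absurd ⟨hmem, Or.inr hxi⟩ h

lemma small_cancel {V : Subring F} {x y : F} (hx : Unit' V x) (hx0 : x ≠ 0)
    (h : Small V (x * y)) : Small V y := by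
  have h2 := small_mul h hx.2
  have e : x * y * x⁻¹ = y := by field_simp; try ring
  rwa [e] at h2

lemma small_pow_sub_one {V : Subring F} {x : F} (hx : x ∈ V) {d : ℕ}
    (hd : Small V (x ^ d - 1)) (k : ℕ) : Small V (x ^ (d * k) - 1) := by
  have hg := geom_sum_mul (x ^ d) k
  have hsum : (∑ i ∈ Finset.range k, (x ^ d) ^ i) ∈ V :=
    Subring.sum_mem _ fun i _ => V.pow_mem (V.pow_mem hx d) i
  have e : x ^ (d * k) - 1 = (x ^ d - 1) * ∑ i ∈ Finset.range k, (x ^ d) ^ i := by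
    rw [mul_comm (x ^ d - 1)]
    rw [hg, pow_mul]
  rw [e]; exact small_mul hd hsum

end BezAux

namespace BezAux

variable {F : Type*} [Field F]

/-- Per-valuation master computation: value facts for `P = t^(LM) - t^L + 1` and
`R = t^(LM+1) - t^(L+1) + 1`, given the unit-case hypothesis `HU`. -/
lemma master {V : Subring F} (hV : IsValSubring V) {t : F} (ht : t ≠ 0)
    {L M : ℕ} (hL : 1 ≤ L) (hM : 2 ≤ M)
    (HU : t ∈ V → t⁻¹ ∈ V →
      Small V (t ^ (L*M) - t ^ L) ∨
      ((Unit' V (t^(L*M) - t^L + 1) ∧ t^(L*M) - t^L + 1 ≠ 0) ∧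
       (Unit' V (t^(L*M+1) - t^(L+1) + 1) ∧ t^(L*M+1) - t^(L+1) + 1 ≠ 0))) :
    (t^(L*M) - t^L + 1 ≠ 0) ∧ (t^(L*M+1) - t^(L+1) + 1 ≠ 0) ∧
    (t^(L*M) - t^L + 1)⁻¹ ∈ V ∧
    t * (t^(L*M) - t^L + 1) * (t^(L*M+1) - t^(L+1) + 1)⁻¹ ∈ V ∧
    (t^(L*M) - t^L + 1) * (t^(L*M+1) - t^(L+1) + 1)⁻¹ ∈ V := by
  obtain ⟨M', rfl⟩ : ∃ M', M = M' + 2 := ⟨M - 2, by omega⟩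
  by_cases htV : t ∈ V
  · -- get that both P and R are units and nonzero
    have HPR : (Unit' V (t^(L*(M'+2)) - t^L + 1) ∧ t^(L*(M'+2)) - t^L + 1 ≠ 0) ∧
        (Unit' V (t^(L*(M'+2)+1) - t^(L+1) + 1) ∧ t^(L*(M'+2)+1) - t^(L+1) + 1 ≠ 0) := by
      have hcase : Small V (t ^ (L*(M'+2)) - t ^ L) ∨
          ((Unit' V (t^(L*(M'+2)) - t^L + 1) ∧ t^(L*(M'+2)) - t^L + 1 ≠ 0) ∧
           (Unit' V (t^(L*(M'+2)+1) - t^(L+1) + 1) ∧ t^(L*(M'+2)+1) - t^(L+1) + 1 ≠ 0)) := by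
        by_cases hti : t⁻¹ ∈ V
        · exact HU htV hti
        · left
          have hsmt : Small V t := ⟨htV, Or.inr hti⟩
          have e : t^(L*(M'+2)) - t^L = t^L * (t^(L*(M'+1)) - 1) := by ring
          rw [e]
          exact small_mul (small_pow hsmt hL) (V.sub_mem (V.pow_mem htV _) V.one_mem)
      rcases hcase with hsm | hPR
      · constructor
        · have e : t^(L*(M'+2)) - t^L + 1 = 1 + (t^(L*(M'+2)) - t^L) := by ring
          rw [e]; exact one_add_small hV hsm
        · have e : t^(L*(M'+2)+1) - t^(L+1) + 1 = 1 + (t^(L*(M'+2)) - t^L) * t := by ring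
          rw [e]; exact one_add_small hV (small_mul hsm htV)
      · exact hPR
    obtain ⟨⟨hPu, hP0⟩, ⟨hRu, hR0⟩⟩ := HPR
    exact ⟨hP0, hR0, hPu.2, V.mul_mem (V.mul_mem htV hPu.1) hRu.2, V.mul_mem hPu.1 hRu.2⟩
  · have hti : t⁻¹ ∈ V := (hV t ht).resolve_left htV
    have hsm : Small V t⁻¹ := ⟨hti, Or.inr (by rwa [inv_inv])⟩
    have hL1 : 1 ≤ L * (M' + 1) := Nat.mul_pos (by omega) (by omega)
    have hL2 : 1 ≤ L * (M' + 2) := Nat.mul_pos (by omega) (by omega)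
    have hε₁ : Small V ((t⁻¹)^(L*(M'+2)) - (t⁻¹)^(L*(M'+1))) :=
      small_sub hV (small_pow hsm hL2) (small_pow hsm hL1)
    have hε₂ : Small V ((t⁻¹)^(L*(M'+2)+1) - (t⁻¹)^(L*(M'+1))) :=
      small_sub hV (small_pow hsm (by omega)) (small_pow hsm hL1)
    obtain ⟨hw₁u, hw₁0⟩ := one_add_small hV hε₁
    obtain ⟨hw₂u, hw₂0⟩ := one_add_small hV hε₂
    set w₁ := 1 + ((t⁻¹)^(L*(M'+2)) - (t⁻¹)^(L*(M'+1))) with hw₁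
    set w₂ := 1 + ((t⁻¹)^(L*(M'+2)+1) - (t⁻¹)^(L*(M'+1))) with hw₂
    have eP : t^(L*(M'+2)) - t^L + 1 = t^(L*(M'+2)) * w₁ := by
      have h2 : t^(L*(M'+2)) * t⁻¹^(L*(M'+2)) = 1 := by rw [← mul_pow, mul_inv_cancel₀ ht, one_pow]
      have h3 : t^(L*(M'+1)) * t⁻¹^(L*(M'+1)) = 1 := by rw [← mul_pow, mul_inv_cancel₀ ht, one_pow]
      rw [hw₁]; linear_combination (-1:F) * h2 + t^L * h3
    have eR : t^(L*(M'+2)+1) - t^(L+1) + 1 = t^(L*(M'+2)+1) * w₂ := by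
      have h2 : t^(L*(M'+2)+1) * t⁻¹^(L*(M'+2)+1) = 1 := by rw [← mul_pow, mul_inv_cancel₀ ht, one_pow]
      have h3 : t^(L*(M'+1)) * t⁻¹^(L*(M'+1)) = 1 := by rw [← mul_pow, mul_inv_cancel₀ ht, one_pow]
      rw [hw₂]; linear_combination (-1:F) * h2 + t^(L+1) * h3
    have hP0 : t^(L*(M'+2)) - t^L + 1 ≠ 0 := by
      rw [eP]; exact mul_ne_zero (pow_ne_zero _ ht) hw₁0
    have hR0 : t^(L*(M'+2)+1) - t^(L+1) + 1 ≠ 0 := by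
      rw [eR]; exact mul_ne_zero (pow_ne_zero _ ht) hw₂0
    refine ⟨hP0, hR0, ?_, ?_, ?_⟩
    · have e : (t^(L*(M'+2)) - t^L + 1)⁻¹ = (t⁻¹)^(L*(M'+2)) * w₁⁻¹ := by
        rw [eP, mul_inv, inv_pow]
      rw [e]; exact V.mul_mem (V.pow_mem hti _) hw₁u.2
    · have e : t * (t^(L*(M'+2)) - t^L + 1) * (t^(L*(M'+2)+1) - t^(L+1) + 1)⁻¹
          = w₁ * w₂⁻¹ := by
        rw [eP, eR]
        field_simp
        ring
      rw [e]; exact V.mul_mem hw₁u.1 hw₂u.2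
    · have e : (t^(L*(M'+2)) - t^L + 1) * (t^(L*(M'+2)+1) - t^(L+1) + 1)⁻¹
          = t⁻¹ * (w₁ * w₂⁻¹) := by
        rw [eP, eR]
        field_simp
        ring
      rw [e]; exact V.mul_mem hti (V.mul_mem hw₁u.1 hw₂u.2)

/-- For a unit `t` with non-torsion residue, for each shape `t^(L*M+e) + c` there is at most
one `M` making it a nonunit. -/
lemma bad_subsingleton {V : Subring F} (hV : IsValSubring V) {t : F} (ht : t ≠ 0)
    (htV : t ∈ V) (hti : t⁻¹ ∈ V)
    (hnt : ¬ ∃ d : ℕ, 1 ≤ d ∧ Small V (t ^ d - 1)) {L : ℕ} (hL : 1 ≤ L) (e : ℕ) (c : F) :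
    Set.Subsingleton {M : ℕ | Small V (t ^ (L * M + e) + c)} := by
  have key : ∀ M₁ M₂ : ℕ, M₂ < M₁ → Small V (t ^ (L * M₁ + e) + c) →
      Small V (t ^ (L * M₂ + e) + c) → False := by
    intro M₁ M₂ hlt h₁ h₂
    obtain ⟨k, rfl⟩ : ∃ k, M₁ = M₂ + (k + 1) := ⟨M₁ - M₂ - 1, by omega⟩
    have hdiff : Small V (t ^ (L * (M₂ + (k+1)) + e) - t ^ (L * M₂ + e)) := by
      have := small_sub hV h₁ h₂
      have e' : t ^ (L * (M₂ + (k+1)) + e) + c - (t ^ (L * M₂ + e) + c)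
          = t ^ (L * (M₂ + (k+1)) + e) - t ^ (L * M₂ + e) := by ring
      rwa [e'] at this
    have efac : t ^ (L * (M₂ + (k+1)) + e) - t ^ (L * M₂ + e)
        = t ^ (L * M₂ + e) * (t ^ (L * (k+1)) - 1) := by ring
    rw [efac] at hdiff
    have hsc := small_cancel (unit_pow ⟨htV, hti⟩ _) (pow_ne_zero _ ht) hdiff
    exact hnt ⟨L * (k+1), Nat.mul_pos (by omega) (by omega), hsc⟩
  intro M₁ h₁ M₂ h₂
  by_contra hne
  rcases lt_or_gt_of_ne hne with h | h
  · exact key M₂ M₁ h h₂ h₁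
  · exact key M₁ M₂ h h₁ h₂

end BezAux

namespace BezAux

variable {F : Type*} [Field F]

lemma key (Z : Set (Subring F)) (hfin : Z.Finite) (hZ : ∀ V ∈ Z, IsValSubring V)
    (A : Subring F) (hA : ∀ x : F, x ∈ A ↔ ∀ V ∈ Z, x ∈ V) {t : F} (ht : t ≠ 0) :
    ∃ u r s : F, u ≠ 0 ∧ r ∈ A ∧ s ∈ A ∧ u = r * t + s ∧ t * u⁻¹ ∈ A ∧ u⁻¹ ∈ A := by
  classical
  rcases Set.eq_empty_or_nonempty Z with rfl | ⟨V₀, hV₀⟩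
  · refine ⟨1, 0, 1, one_ne_zero, (hA 0).2 (by simp), (hA 1).2 (by simp), by ring,
      (hA _).2 (by simp), (hA _).2 (by simp)⟩
  -- torsion exponents
  set f : Subring F → ℕ := fun V =>
    if h : ∃ d : ℕ, 1 ≤ d ∧ Small V (t ^ d - 1) then h.choose else 1 with hf
  have hf1 : ∀ V, 1 ≤ f V := by
    intro V; rw [hf]; dsimp only
    split_ifs with h
    · exact h.choose_spec.1
    · exact le_refl 1
  have hfspec : ∀ V, (∃ d : ℕ, 1 ≤ d ∧ Small V (t ^ d - 1)) → Small V (t ^ (f V) - 1) := by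
    intro V h; rw [hf]; dsimp only; rw [dif_pos h]; exact h.choose_spec.2
  set L := ∏ V ∈ hfin.toFinset, f V with hLdef
  have hL : 1 ≤ L := Finset.one_le_prod' fun V _ => hf1 V
  have hdvd : ∀ V ∈ Z, f V ∣ L := fun V hv =>
    Finset.dvd_prod_of_mem f (hfin.mem_toFinset.mpr hv)
  -- the bad set of exponents M
  set Cond : Subring F → Prop := fun V =>
    t ∈ V ∧ t⁻¹ ∈ V ∧ ¬ ∃ d : ℕ, 1 ≤ d ∧ Small V (t ^ d - 1) with hCond
  set Bad : Set ℕ := ⋃ V ∈ Z, {M : ℕ | Cond V ∧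
    (Small V (t ^ (L * M + 0) + (1 - t ^ L)) ∨
     Small V (t ^ (L * M + 1) + (1 - t ^ (L + 1))))} with hBad
  have hBadFin : Bad.Finite := by
    refine Set.Finite.biUnion hfin fun V hVZ => ?_
    by_cases hc : Cond V
    · have h1 := bad_subsingleton (hZ V hVZ) ht hc.1 hc.2.1 hc.2.2 hL 0 (1 - t ^ L)
      have h2 := bad_subsingleton (hZ V hVZ) ht hc.1 hc.2.1 hc.2.2 hL 1 (1 - t ^ (L+1))
      refine Set.Finite.subset (h1.finite.union h2.finite) ?_
      intro M hM
      rcases hM.2 with h | h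
      · exact Or.inl h
      · exact Or.inr h
    · convert Set.finite_empty
      ext M; simp only [Set.mem_setOf_eq]
      exact iff_of_false (fun h => hc h.1) (by simp)
  -- choose a good M
  obtain ⟨M, hM⟩ := (hBadFin.union (Set.finite_Icc 0 1)).infinite_compl.nonempty
  simp only [Set.mem_compl_iff, Set.mem_union, not_or, Set.mem_Icc] at hM
  obtain ⟨hMBad, hM2'⟩ := hM
  have hM2 : 2 ≤ M := by omega
  -- facts for every V
  have facts : ∀ V ∈ Z,
      (t^(L*M) - t^L + 1 ≠ 0) ∧ (t^(L*M+1) - t^(L+1) + 1 ≠ 0) ∧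
      (t^(L*M) - t^L + 1)⁻¹ ∈ V ∧
      t * (t^(L*M) - t^L + 1) * (t^(L*M+1) - t^(L+1) + 1)⁻¹ ∈ V ∧
      (t^(L*M) - t^L + 1) * (t^(L*M+1) - t^(L+1) + 1)⁻¹ ∈ V := by
    intro V hVZ
    refine master (hZ V hVZ) ht hL hM2 ?_
    intro htV hti
    by_cases htor : ∃ d : ℕ, 1 ≤ d ∧ Small V (t ^ d - 1)
    · left
      obtain ⟨k, hk⟩ := hdvd V hVZ
      have hsmL : Small V (t ^ L - 1) := by
        rw [hk]; exact small_pow_sub_one htV (hfspec V htor) k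
      have hsmLM : Small V (t ^ (L * M) - 1) := small_pow_sub_one htV hsmL M
      have e : t ^ (L*M) - t ^ L = (t ^ (L*M) - 1) - (t ^ L - 1) := by ring
      rw [e]; exact small_sub (hZ V hVZ) hsmLM hsmL
    · right
      have hnotbad : ¬ (Cond V ∧
          (Small V (t ^ (L * M + 0) + (1 - t ^ L)) ∨
           Small V (t ^ (L * M + 1) + (1 - t ^ (L + 1))))) := by
        intro hcontra
        exact hMBad (Set.mem_biUnion hVZ hcontra)
      have hcond : Cond V := ⟨htV, hti, htor⟩
      have hnot : ¬ (Small V (t ^ (L * M + 0) + (1 - t ^ L)) ∨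
           Small V (t ^ (L * M + 1) + (1 - t ^ (L + 1)))) := fun h => hnotbad ⟨hcond, h⟩
      push_neg at hnot
      have eP : t ^ (L*M) - t ^ L + 1 = t ^ (L * M + 0) + (1 - t ^ L) := by ring
      have eR : t ^ (L*M+1) - t ^ (L+1) + 1 = t ^ (L * M + 1) + (1 - t ^ (L+1)) := by ring
      have hPmem : t ^ (L*M) - t ^ L + 1 ∈ V :=
        V.add_mem (V.sub_mem (V.pow_mem htV _) (V.pow_mem htV _)) V.one_mem
      have hRmem : t ^ (L*M+1) - t ^ (L+1) + 1 ∈ V :=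
        V.add_mem (V.sub_mem (V.pow_mem htV _) (V.pow_mem htV _)) V.one_mem
      constructor
      · exact unit_of_not_small hPmem (by rw [eP]; exact hnot.1)
      · exact unit_of_not_small hRmem (by rw [eR]; exact hnot.2)
  -- assemble
  set P := t^(L*M) - t^L + 1 with hP
  set R := t^(L*M+1) - t^(L+1) + 1 with hR
  obtain ⟨hP0, hR0, -, -, -⟩ := facts V₀ hV₀
  have hsA : P⁻¹ ∈ A := (hA _).2 fun V hv => (facts V hv).2.2.1
  have hrA : (1 : F) - P⁻¹ ∈ A := A.sub_mem A.one_mem hsA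
  have hRP : R = t * P - t + 1 := by rw [hP, hR]; ring
  refine ⟨R * P⁻¹, 1 - P⁻¹, P⁻¹, mul_ne_zero hR0 (inv_ne_zero hP0), hrA, hsA, ?_, ?_, ?_⟩
  · rw [hRP]; field_simp
  · have e : t * (R * P⁻¹)⁻¹ = t * P * R⁻¹ := by
      rw [mul_inv, inv_inv]; ring
    rw [e]; exact (hA _).2 fun V hv => (facts V hv).2.2.2.1
  · have e : (R * P⁻¹)⁻¹ = P * R⁻¹ := by
      rw [mul_inv, inv_inv]; ring
    rw [e]; exact (hA _).2 fun V hv => (facts V hv).2.2.2.2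

end BezAux

/-- A finite intersection of valuation rings of `F` is a Bézout domain with quotient field `F`:
every finitely generated ideal is principal. -/
theorem finite_intersection_of_valuation_rings_isBezout
    {F : Type*} [Field F] (Z : Set (Subring F)) (hfin : Z.Finite)
    (hZ : ∀ V ∈ Z, IsValSubring V) (A : Subring F)
    (hA : ∀ x : F, x ∈ A ↔ ∀ V ∈ Z, x ∈ V) :
    HasQF A ∧ ∀ I : Ideal A, I.FG → I.IsPrincipal := by
  classical
  constructor
  · intro x
    by_cases hx : x = 0
    · exact ⟨0, 1, by simp, by simp [hx]⟩
    · obtain ⟨u, r, s, hu0, hr, hs, hurs, htu, hiu⟩ := BezAux.key Z hfin hZ A hA hx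
      refine ⟨⟨x * u⁻¹, htu⟩, ⟨u⁻¹, hiu⟩, ?_, ?_⟩
      · exact inv_ne_zero hu0
      · push_cast
        field_simp
  · have pair : ∀ a b : A, (Ideal.span {a, b} : Ideal A).IsPrincipal := by
      intro a b
      by_cases hb : b = 0
      · subst hb
        refine ⟨⟨a, ?_⟩⟩
        show Ideal.span _ = _
        rw [show ({a, (0:A)} : Set A) = insert (0:A) {a} from Set.pair_comm a 0]
        rw [show Ideal.span (insert (0:A) {a}) = Submodule.span A (insert (0:A) {a}) from rfl,
          Submodule.span_insert_zero]
      by_cases ha : a = 0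
      · subst ha
        refine ⟨⟨b, ?_⟩⟩
        rw [show Ideal.span ({(0:A), b} : Set A) = Submodule.span A (insert (0:A) {b}) from rfl,
          Submodule.span_insert_zero]
      have hbF : (b : F) ≠ 0 := fun h => hb (by exact_mod_cast h)
      have haF : (a : F) ≠ 0 := fun h => ha (by exact_mod_cast h)
      set t : F := (a : F) / (b : F) with htdef
      have ht : t ≠ 0 := div_ne_zero haF hbF
      have htb : t * (b : F) = (a : F) := div_mul_cancel₀ _ hbF
      obtain ⟨u, r, s, hu0, hr, hs, hurs, htu, hiu⟩ := BezAux.key Z hfin hZ A hA ht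
      set r' : A := ⟨r, hr⟩
      set s' : A := ⟨s, hs⟩
      set d : A := r' * a + s' * b with hd
      have hdF : (d : F) = u * (b : F) := by
        push_cast [hd]
        rw [hurs, ← htb]; ring
      set c₁ : A := ⟨t * u⁻¹, htu⟩
      set c₂ : A := ⟨u⁻¹, hiu⟩
      have ha' : a = d * c₁ := by
        apply Subtype.ext
        show (a:F) = (d:F) * (t * u⁻¹)
        rw [hdF, ← htb]
        linear_combination (-(b:F) * t) * mul_inv_cancel₀ hu0
      have hb' : b = d * c₂ := by
        apply Subtype.ext
        show (b:F) = (d:F) * u⁻¹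
        rw [hdF]
        linear_combination (-(b:F)) * mul_inv_cancel₀ hu0
      refine ⟨⟨d, le_antisymm ?_ ?_⟩⟩
      · rw [Ideal.span_le]
        rintro x (rfl | rfl)
        · exact Ideal.mem_span_singleton.2 ⟨c₁, ha'⟩
        · exact Ideal.mem_span_singleton.2 ⟨c₂, hb'⟩
      · rw [Submodule.span_le, Set.singleton_subset_iff]
        exact Ideal.mem_span_pair.2 ⟨r', s', by rw [hd]⟩
    intro I hI
    obtain ⟨S, hS⟩ := hI
    subst hS
    induction S using Finset.induction_on with
    | empty => exact ⟨⟨0, by rw [Finset.coe_empty, Ideal.span_empty]; exact (Submodule.span_zero_singleton _).symm⟩⟩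
    | @insert a S hnotmem IH =>
      obtain ⟨d₀, hd₀⟩ := IH
      rw [Finset.coe_insert, Ideal.span_insert, hd₀,
        show Submodule.span A {d₀} = Ideal.span {d₀} from rfl, ← Ideal.span_insert]
      exact pair a d₀
end

section
/- Let F be a field, A a subring of F with quotient field F, and B a subring of F containing A (an overring of A). If A is a Prüfer domain, then B is a Prüfer domain, and if moreover the Picard group of A is torsion, then the Picard group of B is torsion. -/
section Aux

open Submodule Pointwise

variable {F : Type*} [Field F]

/-- The `B`-span of the (coercion of the) `A`-span of a set is the `B`-span of the set. -/
lemma spanB_spanA (A B : Subring F) (hAB : A ≤ B) (S : Set F) :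
    span B ((span A S : Submodule A F) : Set F) = span B S := by
  apply le_antisymm
  · rw [Submodule.span_le]
    intro x hx
    induction hx using Submodule.span_induction with
    | mem x h => exact subset_span h
    | zero => exact zero_mem _
    | add x y _ _ hx hy => exact add_mem hx hy
    | smul a x _ hx =>
        have hb := Submodule.smul_mem (span B S) (⟨(a : F), hAB a.2⟩ : B) hx
        exact hb
  · exact Submodule.span_mono Submodule.subset_span

lemma spanB_mul (A B : Subring F) (hAB : A ≤ B) (I1 I2 : Submodule A F) :
    span B ((I1 * I2 : Submodule A F) : Set F)
      = span B (I1 : Set F) * span B (I2 : Set F) := by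
  rw [Submodule.mul_eq_span_mul_set, spanB_spanA A B hAB, Submodule.span_mul_span]

lemma spanB_pow (A B : Subring F) (hAB : A ≤ B) (I : Submodule A F) :
    ∀ n : ℕ, span B ((I ^ (n + 1) : Submodule A F) : Set F)
      = (span B (I : Set F)) ^ (n + 1)
  | 0 => by rw [zero_add, pow_one, pow_one]
  | (n + 1) => by
      rw [pow_succ, spanB_mul A B hAB, spanB_pow A B hAB I n, ← pow_succ]

/-- Totality of local divisibility at a prime: for nonzero `x y`, either `y/x` or `x/y` lies
in the localization at `M`. -/
lemma loc_total {A : Subring F} (hP : IsPruferQF A) {M : Ideal A} (hM : M.IsPrime)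
    {x y : F} (hx : x ≠ 0) (hy : y ≠ 0) :
    (∃ a t : A, t ∉ M ∧ (t : F) * y = (a : F) * x) ∨
    (∃ a t : A, t ∉ M ∧ (t : F) * x = (a : F) * y) := by
  have ht0 : ∀ t : A, t ∉ M → (t : F) ≠ 0 := by
    intro t htM h0
    exact htM (by rw [show t = 0 from Subtype.ext h0]; exact M.zero_mem)
  rcases hP.2 M hM (y / x) (div_ne_zero hy hx) with h | h
  · obtain ⟨a, t, htM, heq⟩ := h
    left
    refine ⟨a, t, htM, ?_⟩
    have h2 := (div_eq_div_iff hx (ht0 t htM)).mp heq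
    linear_combination h2
  · obtain ⟨a, t, htM, heq⟩ := h
    rw [inv_div] at heq
    right
    refine ⟨a, t, htM, ?_⟩
    have h2 := (div_eq_div_iff hy (ht0 t htM)).mp heq
    linear_combination h2

/-- In a finite set of nonzero elements there is one that "locally divides" all others. -/
lemma exists_dominant {A : Subring F} (hP : IsPruferQF A) {M : Ideal A} (hM : M.IsPrime) :
    ∀ s : Finset F, s.Nonempty → (∀ x ∈ s, x ≠ 0) →
      ∃ x ∈ s, ∀ y ∈ s, ∃ a t : A, t ∉ M ∧ (t : F) * y = (a : F) * x := by
  classical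
  intro s
  induction s using Finset.induction_on with
  | empty => intro h; exact absurd h (by simp)
  | @insert c s hcs ih =>
    intro _ hz
    have hc0 : c ≠ 0 := hz c (Finset.mem_insert_self c s)
    have h1M : (1 : A) ∉ M := (Ideal.ne_top_iff_one M).mp hM.ne_top
    rcases s.eq_empty_or_nonempty with rfl | hs
    · refine ⟨c, Finset.mem_insert_self c ∅, ?_⟩
      intro y hy
      have : y = c := by simpa using hy
      subst this
      exact ⟨1, 1, h1M, by ring⟩
    · obtain ⟨x, hxs, hx⟩ := ih hs (fun z hzs => hz z (Finset.mem_insert_of_mem hzs))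
      have hx0 : x ≠ 0 := hz x (Finset.mem_insert_of_mem hxs)
      rcases loc_total hP hM hx0 hc0 with ⟨a, t, htM, heq⟩ | ⟨a, t, htM, heq⟩
      · refine ⟨x, Finset.mem_insert_of_mem hxs, ?_⟩
        intro y hy
        rcases Finset.mem_insert.mp hy with rfl | hys
        · exact ⟨a, t, htM, heq⟩
        · exact hx y hys
      · refine ⟨c, Finset.mem_insert_self c s, ?_⟩
        intro y hy
        rcases Finset.mem_insert.mp hy with rfl | hys
        · exact ⟨1, 1, h1M, by ring⟩
        · obtain ⟨a', t', ht'M, heq'⟩ := hx y hys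
          refine ⟨a' * a, t' * t, fun hmem => ?_, ?_⟩
          · rcases hM.mem_or_mem hmem with h | h
            exacts [ht'M h, htM h]
          · push_cast
            calc (t' : F) * (t : F) * y = (t : F) * ((t' : F) * y) := by ring
              _ = (t : F) * ((a' : F) * x) := by rw [heq']
              _ = (a' : F) * ((t : F) * x) := by ring
              _ = (a' : F) * ((a : F) * c) := by rw [heq]
              _ = (a' : F) * (a : F) * c := by ring

/-- In a Prüfer domain (in the sense of `IsPruferQF`), every finitely generated nonzero
`A`-submodule of `F` is invertible. -/
lemma fg_invertible {A : Subring F} (hP : IsPruferQF A) (s : Finset F)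
    (hs : ∃ x ∈ s, x ≠ 0) :
    ∃ I' : Submodule A F, Submodule.span A (s : Set F) * I' = 1 := by
  classical
  let I' : Submodule A F :=
    { carrier := {z | ∀ w ∈ s, w * z ∈ (1 : Submodule A F)}
      add_mem' := fun {z1 z2} h1 h2 w hw => by
        rw [mul_add]; exact add_mem (h1 w hw) (h2 w hw)
      zero_mem' := fun w hw => by rw [mul_zero]; exact zero_mem _
      smul_mem' := fun a z hz w hw => by
        have h : w * (a • z) = a • (w * z) := by
          show w * ((a : F) * z) = (a : F) * (w * z); ring
        rw [h]; exact Submodule.smul_mem _ _ (hz w hw) }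
  have hI'mem : ∀ z ∈ I', ∀ w ∈ s, w * z ∈ (1 : Submodule A F) := fun z h => h
  have hmemI' : ∀ z : F, (∀ w ∈ s, w * z ∈ (1 : Submodule A F)) → z ∈ I' := fun z h => h
  refine ⟨I', le_antisymm ?_ ?_⟩
  · rw [Submodule.mul_le]
    intro m hm z hz
    induction hm using Submodule.span_induction with
    | mem w hw => exact hI'mem z hz w hw
    | zero => rw [zero_mul]; exact zero_mem _
    | add x y _ _ hx hy => rw [add_mul]; exact add_mem hx hy
    | smul a x _ hx =>
        have h : (a • x) * z = a • (x * z) := by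
          show ((a : F) * x) * z = (a : F) * (x * z); ring
        rw [h]; exact Submodule.smul_mem _ _ hx
  · -- `1 ≤ span A s * I'`
    have key : (1 : F) ∈ Submodule.span A (s : Set F) * I' := by
      set P := Submodule.span A (s : Set F) * I' with hPdef
      let K : Ideal A :=
        { carrier := {a : A | (a : F) ∈ P}
          add_mem' := fun {u v} h1 h2 => by
            show ((u + v : A) : F) ∈ P
            push_cast
            exact add_mem h1 h2
          zero_mem' := by show ((0 : A) : F) ∈ P; push_cast; exact zero_mem P
          smul_mem' := fun c a ha => by
            show ((c * a : A) : F) ∈ P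
            push_cast
            exact P.smul_mem c ha }
      by_cases hK : K = ⊤
      · have h1K : (1 : A) ∈ K := by rw [hK]; trivial
        simpa using (show ((1 : A) : F) ∈ P from h1K)
      · exfalso
        obtain ⟨M, hMmax, hKM⟩ := Ideal.exists_le_maximal K hK
        have hM : M.IsPrime := hMmax.isPrime
        set s' := s.filter (· ≠ 0) with hs'def
        obtain ⟨x₁, hx₁s, hx₁0⟩ := hs
        have hs'ne : s'.Nonempty := ⟨x₁, Finset.mem_filter.mpr ⟨hx₁s, hx₁0⟩⟩
        obtain ⟨x₀, hx₀s', hdom⟩ := exists_dominant hP hM s' hs'ne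
          (fun z hzs => (Finset.mem_filter.mp hzs).2)
        have hx₀s : x₀ ∈ s := (Finset.mem_filter.mp hx₀s').1
        have hx₀0 : x₀ ≠ 0 := (Finset.mem_filter.mp hx₀s').2
        have hall : ∀ y ∈ s, ∃ a t : A, t ∉ M ∧ (t : F) * y = (a : F) * x₀ := by
          intro y hy
          by_cases hy0 : y = 0
          · exact ⟨0, 1, (Ideal.ne_top_iff_one M).mp hM.ne_top, by simp [hy0]⟩
          · exact hdom y (Finset.mem_filter.mpr ⟨hy, hy0⟩)
        choose! a t htM hteq using hall
        set T : A := ∏ y ∈ s, t y with hT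
        have hTM : T ∉ M := by
          refine Finset.prod_induction t (· ∉ M) ?_ ?_ htM
          · intro u v hu hv hmem
            rcases hM.mem_or_mem hmem with h | h
            exacts [hu h, hv h]
          · exact (Ideal.ne_top_iff_one M).mp hM.ne_top
        have hTz : ((T : F) / x₀) ∈ I' := by
          apply hmemI'
          intro w hw
          obtain ⟨c, hc⟩ := Finset.dvd_prod_of_mem t hw
          rw [Submodule.mem_one]
          refine ⟨c * a w, ?_⟩
          show ((c * a w : A) : F) = w * ((T : F) / x₀)
          have heq := hteq w hw
          have hT' : (T : F) = (t w : F) * (c : F) := by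
            rw [hT, hc]; push_cast; ring
          calc ((c * a w : A) : F) = (c : F) * ((a w : F) * x₀) / x₀ := by
                push_cast
                rw [mul_div_assoc, mul_div_cancel_right₀ _ hx₀0]
            _ = (c : F) * ((t w : F) * w) / x₀ := by rw [heq]
            _ = w * (((t w : F) * (c : F)) / x₀) := by ring
            _ = w * ((T : F) / x₀) := by rw [hT']
        have hTP : ((T : A) : F) ∈ P := by
          have h1 : x₀ * ((T : F) / x₀) ∈ P :=
            Submodule.mul_mem_mul (Submodule.subset_span hx₀s) hTz
          have h2 : (T : F) = x₀ * ((T : F) / x₀) := by field_simp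
          rw [h2]; exact h1
        exact hTM (hKM hTP)
    rw [Submodule.one_eq_span, Submodule.span_le, Set.singleton_subset_iff]
    exact key

end Aux

open Pointwise in
/-- An overring `B` of a Prüfer domain `A` with quotient field `F` is Prüfer, and if the Picard
group of `A` is torsion (every invertible `A`-submodule of `F` has a principal power), then so
is the Picard group of `B`. -/
theorem overring_of_prufer_isPrufer_and_torsion_pic
    {F : Type*} [Field F] (A B : Subring F) (hAB : A ≤ B)
    (hP : IsPruferQF A) :
    IsPruferQF B ∧
    ((∀ J : Submodule A F, (∃ J' : Submodule A F, J * J' = 1) →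
        ∃ n : ℕ, 0 < n ∧ ∃ u : F, J ^ n = Submodule.span A ({u} : Set F)) →
      (∀ J : Submodule B F, (∃ J' : Submodule B F, J * J' = 1) →
        ∃ n : ℕ, 0 < n ∧ ∃ u : F, J ^ n = Submodule.span B ({u} : Set F))) := by
  classical
  constructor
  · -- `B` is Prüfer
    constructor
    · intro x
      obtain ⟨a, b, hb, hx⟩ := hP.1 x
      exact ⟨⟨a, hAB a.2⟩, ⟨b, hAB b.2⟩, hb, hx⟩
    · intro Q hQ x hx
      haveI := hQ
      have hprime : (Q.comap (Subring.inclusion hAB)).IsPrime :=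
        Ideal.IsPrime.comap _
      have hsub : locAt A (Q.comap (Subring.inclusion hAB)) ⊆ locAt B Q := by
        rintro z ⟨a, t, htP, rfl⟩
        exact ⟨⟨a, hAB a.2⟩, ⟨t, hAB t.2⟩, fun h => htP h, rfl⟩
      rcases hP.2 _ hprime x hx with h | h
      exacts [Or.inl (hsub h), Or.inr (hsub h)]
  · -- torsion Picard passes to `B`
    intro htor J hJ
    obtain ⟨J', hJJ'⟩ := hJ
    -- `1 ∈ J * J'`
    have h1 : (1 : F) ∈ J * J' := by
      rw [hJJ', Submodule.one_eq_span]
      exact Submodule.subset_span rfl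
    -- extract a finite generating set of `J`
    have hfin : ∃ tg : Finset F, (↑tg : Set F) ⊆ (J : Set F) ∧
        (1 : F) ∈ Submodule.span B ((↑tg : Set F) * (J' : Set F)) := by
      refine Submodule.mul_induction_on h1 ?_ ?_
      · intro m hm n hn
        refine ⟨{m}, by simpa using hm, ?_⟩
        exact Submodule.subset_span
          (Set.mul_mem_mul (Finset.mem_coe.mpr (Finset.mem_singleton_self m)) hn)
      · rintro x y ⟨t1, ht1, hx⟩ ⟨t2, ht2, hy⟩
        refine ⟨t1 ∪ t2, ?_, ?_⟩
        · intro z hz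
          rcases Finset.mem_union.mp hz with h | h
          exacts [ht1 h, ht2 h]
        · refine add_mem ?_ ?_
          · exact Submodule.span_mono
              (Set.mul_subset_mul_right (by exact_mod_cast Finset.subset_union_left)) hx
          · exact Submodule.span_mono
              (Set.mul_subset_mul_right (by exact_mod_cast Finset.subset_union_right)) hy
    obtain ⟨tg, htgJ, h1span⟩ := hfin
    -- `J` is spanned by `tg`
    have Jeq : J = Submodule.span B (↑tg : Set F) := by
      apply le_antisymm
      · intro w hw
        have hQle : Submodule.span B ((↑tg : Set F) * (J' : Set F)) ≤
            Submodule.comap (LinearMap.mulLeft B w) (Submodule.span B (↑tg : Set F)) := by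
          rw [Submodule.span_le]
          rintro v ⟨xm, hxm, ym, hym, rfl⟩
          have hwy : w * ym ∈ (1 : Submodule B F) := by
            rw [← hJJ']; exact Submodule.mul_mem_mul hw hym
          obtain ⟨b, hb⟩ := Submodule.mem_one.mp hwy
          show w * (xm * ym) ∈ Submodule.span B (↑tg : Set F)
          have : w * (xm * ym) = b • xm := by
            show w * (xm * ym) = (b : F) * xm
            rw [show ((b : F)) = w * ym from hb]
            ring
          rw [this]
          exact Submodule.smul_mem _ _ (Submodule.subset_span hxm)
        have := hQle h1span
        simpa using this
      · rw [Submodule.span_le]; exact htgJ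
    -- `tg` contains a nonzero element
    have hne : ∃ x ∈ tg, x ≠ 0 := by
      by_contra hcon
      push_neg at hcon
      have hJbot : J = ⊥ := by
        rw [Jeq]
        apply le_bot_iff.mp
        rw [Submodule.span_le]
        intro z hz
        simpa using hcon z hz
      rw [hJbot, Submodule.bot_mul] at hJJ'
      have : (1 : F) ∈ (⊥ : Submodule B F) := by
        rw [hJJ', Submodule.one_eq_span]
        exact Submodule.subset_span rfl
      simp at this
    obtain ⟨I', hII'⟩ := fg_invertible hP tg hne
    obtain ⟨n, hn, u, hun⟩ := htor (Submodule.span A (↑tg : Set F)) ⟨I', hII'⟩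
    refine ⟨n, hn, u, ?_⟩
    obtain ⟨m, rfl⟩ : ∃ m, n = m + 1 := ⟨n - 1, (Nat.succ_pred_eq_of_pos hn).symm⟩
    rw [Jeq, ← spanB_spanA A B hAB (↑tg : Set F), ← spanB_pow A B hAB _ m, hun,
      spanB_spanA A B hAB]
end

section
/- Let F be a field, Z a set of valuation rings of F, A = ⋂_{V ∈ Z} V, and suppose for each nonzero t ∈ F there exists a linear homogeneous polynomial f(T0, T1) = a·T0 + b·T1 with a, b ∈ A such that both 1 and t lie in (a + bt)·A. Then A is a Bézout domain with quotient field F. -/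
theorem pair_principal {F : Type*} [Field F] (A : Subring F)
    (h : ∀ t : F, t ≠ 0 → ∃ a b : A,
      (∃ c : A, (1 : F) = ((a : F) + (b : F) * t) * (c : F)) ∧
      (∃ c : A, t = ((a : F) + (b : F) * t) * (c : F)))
    (x y : A) : ∃ z : A, Ideal.span {x, y} = Ideal.span ({z} : Set A) := by
  by_cases hx : x = 0
  · exact ⟨y, by rw [hx]; exact Submodule.span_insert_zero⟩
  by_cases hy : y = 0
  · refine ⟨x, ?_⟩
    rw [Set.pair_comm, hy]
    exact Submodule.span_insert_zero
  have hxF : (x : F) ≠ 0 := fun h0 => hx (Subtype.ext h0)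
  have hyF : (y : F) ≠ 0 := fun h0 => hy (Subtype.ext h0)
  obtain ⟨a, b, ⟨c₁, hc₁⟩, ⟨c₂, hc₂⟩⟩ := h ((x : F) / (y : F)) (div_ne_zero hxF hyF)
  refine ⟨a * y + b * x, ?_⟩
  have hx2 : x = (a * y + b * x) * c₂ := by
    apply Subtype.ext
    push_cast
    field_simp at hc₂
    linear_combination hc₂
  have hy2 : y = (a * y + b * x) * c₁ := by
    apply Subtype.ext
    push_cast
    field_simp at hc₁
    linear_combination hc₁
  apply le_antisymm
  · rw [Ideal.span_le]
    rintro w (rfl | rfl)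
    · exact Ideal.mem_span_singleton.2 ⟨c₂, hx2⟩
    · exact Ideal.mem_span_singleton.2 ⟨c₁, hy2⟩
  · rw [Ideal.span_le, Set.singleton_subset_iff]
    exact Ideal.mem_span_pair.2 ⟨b, a, by ring⟩

/-- If `A` is an intersection of valuation rings of `F` and for each nonzero `t ∈ F` there is a
linear homogeneous polynomial `aT₀ + bT₁` with `a, b ∈ A` such that `1` and `t` lie in
`(a + bt)A`, then `A` is a Bézout domain with quotient field `F`. -/
theorem bezout_of_linear_form_condition
    {F : Type*} [Field F] (Z : Set (Subring F)) (hZ : ∀ V ∈ Z, IsValSubring V)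
    (A : Subring F) (hA : ∀ x : F, x ∈ A ↔ ∀ V ∈ Z, x ∈ V)
    (h : ∀ t : F, t ≠ 0 → ∃ a b : A,
      (∃ c : A, (1 : F) = ((a : F) + (b : F) * t) * (c : F)) ∧
      (∃ c : A, t = ((a : F) + (b : F) * t) * (c : F))) :
    HasQF A ∧ ∀ I : Ideal A, I.FG → I.IsPrincipal := by
  constructor
  · intro x
    by_cases hx : x = 0
    · exact ⟨0, 1, by simp [hx]⟩
    obtain ⟨a, b, ⟨c₁, hc₁⟩, ⟨c₂, hc₂⟩⟩ := h x hx
    have hc₁0 : (c₁ : F) ≠ 0 := by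
      intro h0
      rw [h0, mul_zero] at hc₁
      exact one_ne_zero hc₁
    refine ⟨c₂, c₁, hc₁0, ?_⟩
    field_simp
    linear_combination (c₁ : F) * hc₂ - (c₂ : F) * hc₁
  · intro I hI
    refine Submodule.fg_induction (motive := fun (J : Ideal A) _ => J.IsPrincipal) ?_ ?_ I hI
    · exact fun x => ⟨x, rfl⟩
    · rintro J K _ _ ⟨j, rfl⟩ ⟨k, rfl⟩
      obtain ⟨z, hz⟩ := pair_principal A h j k
      refine ⟨z, ?_⟩
      rw [← Submodule.span_union, Set.singleton_union]
      exact hz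
end

section
/- Let F be a field, Z a set of valuation rings of F with A = ⋂_{V ∈ Z} V, and let t0, ..., tn be nonzero elements of F and f ∈ A[T0, ..., Tn] homogeneous of positive degree d with u = f(t0, ..., tn). If t_i^d ∈ uA for all i, then for every V ∈ Z and every monomial t_0^{e_0}···t_n^{e_n} with e_0 + ... + e_n = d, we have t_0^{e_0}···t_n^{e_n} ∈ uV. -/

lemma exists_forall_rel {ι : Type*} (r : ι → ι → Prop)
    (htrans : ∀ i j k, r i j → r j k → r i k) (s : Finset ι) :
    s.Nonempty → (∀ i ∈ s, ∀ j ∈ s, r i j ∨ r j i) → ∃ i ∈ s, ∀ j ∈ s, r i j := by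
  classical
  induction s using Finset.induction_on with
  | empty => intro hs; exact absurd hs (by simp)
  | @insert a s ha ih =>
    intro _ hr
    rcases s.eq_empty_or_nonempty with h | h
    · subst h
      refine ⟨a, by simp, ?_⟩
      intro j hj
      simp only [Finset.mem_insert, Finset.notMem_empty, or_false] at hj
      rw [hj]
      rcases hr a (by simp) a (by simp) with h | h <;> exact h
    · obtain ⟨i, hi, hforall⟩ := ih h (fun i hi j hj =>
        hr i (Finset.mem_insert_of_mem hi) j (Finset.mem_insert_of_mem hj))
      rcases hr i (Finset.mem_insert_of_mem hi) a (Finset.mem_insert_self a s) with hia | hai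
      · exact ⟨i, Finset.mem_insert_of_mem hi, fun j hj => by
          rcases Finset.mem_insert.mp hj with rfl | hj
          · exact hia
          · exact hforall j hj⟩
      · exact ⟨a, Finset.mem_insert_self a s, fun j hj => by
          rcases Finset.mem_insert.mp hj with rfl | hj
          · rcases hr j (Finset.mem_insert_self j s) j (Finset.mem_insert_self j s) with h' | h' <;> exact h'
          · exact htrans a i j hai (hforall j hj)⟩

/-- If `f` is homogeneous of positive degree `d`, `u = f(t₀,…,tₙ)` and `tᵢ^d ∈ uA` for all `i`,
then every monomial `t₀^{e₀}⋯tₙ^{eₙ}` with `e₀ + ⋯ + eₙ = d` lies in `uV` for each `V ∈ Z`. -/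
theorem monomial_mem_of_pow_mem
    {F : Type*} [Field F] (Z : Set (Subring F)) (hZ : ∀ V ∈ Z, IsValSubring V)
    (A : Subring F) (hA : ∀ x : F, x ∈ A ↔ ∀ V ∈ Z, x ∈ V)
    (n : ℕ) (t : Fin (n + 1) → F) (ht : ∀ i, t i ≠ 0)
    (f : MvPolynomial (Fin (n + 1)) A) (d : ℕ) (hd : 0 < d)
    (hf : f.IsHomogeneous d)
    (u : F) (hu : u = MvPolynomial.eval₂ A.subtype t f)
    (h : ∀ i, ∃ a : A, t i ^ d = u * (a : F)) :
    ∀ V ∈ Z, ∀ e : Fin (n + 1) → ℕ, (∑ i, e i) = d →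
      ∃ v ∈ V, (∏ i, t i ^ e i) = u * v := by
  intro V hV e he
  have hu0 : u ≠ 0 := by
    obtain ⟨a, ha⟩ := h 0
    intro h0
    rw [h0, zero_mul] at ha
    exact pow_ne_zero d (ht 0) ha
  -- the divisibility relation in V
  set r : Fin (n + 1) → Fin (n + 1) → Prop := fun i j => t j / t i ∈ V with hr_def
  have htrans : ∀ i j k, r i j → r j k → r i k := by
    intro i j k hij hjk
    have : t k / t i = (t k / t j) * (t j / t i) := by
      field_simp
      rw [div_eq_div_iff (ht i) (mul_ne_zero (ht i) (ht j))]
      ring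
    rw [hr_def]
    simp only
    rw [this]
    exact mul_mem hjk hij
  have htot : ∀ i ∈ Finset.univ, ∀ j ∈ (Finset.univ : Finset (Fin (n+1))), r i j ∨ r j i := by
    intro i _ j _
    have hne : t j / t i ≠ 0 := div_ne_zero (ht j) (ht i)
    rcases hZ V hV _ hne with h' | h'
    · exact Or.inl h'
    · right
      rw [hr_def]
      simp only
      rwa [inv_div] at h'
  obtain ⟨i₀, _, hi₀⟩ := exists_forall_rel r htrans Finset.univ Finset.univ_nonempty htot
  obtain ⟨a, ha⟩ := h i₀
  refine ⟨(a : F) * ∏ j, (t j / t i₀) ^ e j, ?_, ?_⟩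
  · exact mul_mem ((hA a).mp a.2 V hV)
      (prod_mem fun j _ => pow_mem (hi₀ j (Finset.mem_univ j)) (e j))
  · have key : ∀ j, t j = t i₀ * (t j / t i₀) := fun j => by
      rw [← mul_div_assoc]
      exact (mul_div_cancel_left₀ (t j) (ht i₀)).symm
    calc ∏ j, t j ^ e j = ∏ j, (t i₀ * (t j / t i₀)) ^ e j := by
            apply Finset.prod_congr rfl
            intro j _
            rw [← key j]
      _ = (∏ j, t i₀ ^ e j) * ∏ j, (t j / t i₀) ^ e j := by
            rw [← Finset.prod_mul_distrib]
            apply Finset.prod_congr rfl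
            intro j _
            rw [mul_pow]
      _ = t i₀ ^ (∑ j, e j) * ∏ j, (t j / t i₀) ^ e j := by
            rw [Finset.prod_pow_eq_pow_sum]
      _ = u * ((a : F) * ∏ j, (t j / t i₀) ^ e j) := by
            rw [he, ha, mul_assoc]
end

section
/- Let F be a field and V a valuation ring of F with residue field κ. If f ∈ V[T] is a monic polynomial of positive degree whose reduction modulo the maximal ideal has no root in κ, then for every t ∈ F we have f(t) ≠ 0 and t^{deg f} / f(t) ∈ V and 1/f(t) ∈ V. -/
/-- If a unit of `V` is coerced to `F`, its inverse lies in `V`. -/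
lemma unit_inv_mem {F : Type*} [Field F] (V : ValuationSubring F) {u : V}
    (hu : IsUnit u) : ((u : F))⁻¹ ∈ V := by
  obtain ⟨v, hv⟩ := hu.exists_right_inv
  have h1 : (v : F) * (u : F) = 1 := by
    have : (u : V) * v = 1 := hv
    calc (v : F) * (u : F) = ((u * v : V) : F) := by push_cast; ring
    _ = 1 := by rw [this]; rfl
  have h2 : (u : F) * (v : F) = 1 := by rw [mul_comm]; exact h1
  rw [inv_eq_of_mul_eq_one_right h2]; exact v.2

/-- If `V` is a valuation ring of `F` and `f ∈ V[T]` is monic of positive degree whose reduction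
modulo the maximal ideal has no root in the residue field, then for every `t : F`, `f(t) ≠ 0`,
`t^{deg f}/f(t) ∈ V` and `1/f(t) ∈ V`. -/
theorem valuationSubring_no_residue_root
    {F : Type*} [Field F] (V : ValuationSubring F)
    (f : Polynomial V) (hmonic : f.Monic) (hdeg : 0 < f.natDegree)
    (h : ∀ x : IsLocalRing.ResidueField V,
      Polynomial.eval x (f.map (IsLocalRing.residue V)) ≠ 0) :
    ∀ t : F, Polynomial.eval₂ V.subtype t f ≠ 0 ∧
      t ^ f.natDegree / Polynomial.eval₂ V.subtype t f ∈ V ∧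
      (Polynomial.eval₂ V.subtype t f)⁻¹ ∈ V := by
  intro t
  by_cases ht : t ∈ V
  · -- t ∈ V
    set a : V := ⟨t, ht⟩
    have heval : Polynomial.eval₂ V.subtype t f = (V.subtype (Polynomial.eval a f)) := by
      have e : V.subtype a = t := rfl
      rw [← e]; exact Polynomial.eval₂_at_apply (p := f) V.subtype a
    have hres : IsLocalRing.residue V (Polynomial.eval a f) ≠ 0 := by
      have : IsLocalRing.residue V (Polynomial.eval a f)
          = Polynomial.eval (IsLocalRing.residue V a) (f.map (IsLocalRing.residue V)) := by
        rw [Polynomial.eval_map, Polynomial.eval₂_hom]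
      rw [this]; exact h _
    have hunit : IsUnit (Polynomial.eval a f) :=
      (IsLocalRing.residue_ne_zero_iff_isUnit _).mp hres
    have hne : Polynomial.eval₂ V.subtype t f ≠ 0 := by
      rw [heval]
      exact fun h0 => hunit.ne_zero (Subtype.coe_injective h0)
    refine ⟨hne, ?_, ?_⟩
    · rw [div_eq_mul_inv, heval]
      exact mul_mem (pow_mem ht _) (unit_inv_mem V hunit)
    · rw [heval]; exact unit_inv_mem V hunit
  · -- t ∉ V, so t⁻¹ ∈ maximal ideal
    have ht0 : t ≠ 0 := fun h0 => ht (h0 ▸ V.zero_mem)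
    have hinv : t⁻¹ ∈ V := (V.mem_or_inv_mem t).resolve_left ht
    set s : V := ⟨t⁻¹, hinv⟩
    have hs_nonunit : ¬ IsUnit s := by
      intro hu
      exact ht (by simpa [s] using unit_inv_mem V hu)
    have : Invertible t := invertibleOfNonzero ht0
    have hrev := Polynomial.eval₂_reverse_mul_pow V.subtype t f
    have hinvt : (⅟ t : F) = t⁻¹ := by
      simp [invOf_eq_inv]
    rw [hinvt] at hrev
    have hevs : Polynomial.eval₂ V.subtype t⁻¹ f.reverse
        = (V.subtype (Polynomial.eval s f.reverse)) := by
      have e : V.subtype s = t⁻¹ := rfl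
      rw [← e]; exact Polynomial.eval₂_at_apply (p := f.reverse) V.subtype s
    -- residue of eval s f.reverse is 1
    have hress : IsLocalRing.residue V s = 0 :=
      (IsLocalRing.residue_eq_zero_iff _).mpr fun hu => hs_nonunit hu
    have hresrev : IsLocalRing.residue V (Polynomial.eval s f.reverse) ≠ 0 := by
      have e1 : IsLocalRing.residue V (Polynomial.eval s f.reverse)
          = Polynomial.eval (IsLocalRing.residue V s)
            (f.reverse.map (IsLocalRing.residue V)) := by
        rw [Polynomial.eval_map, Polynomial.eval₂_hom]
      rw [e1, hress, Polynomial.eval_zero_map, ← Polynomial.coeff_zero_eq_eval_zero,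
        Polynomial.coeff_zero_reverse, hmonic.leadingCoeff]
      simp
    have hunit : IsUnit (Polynomial.eval s f.reverse) :=
      (IsLocalRing.residue_ne_zero_iff_isUnit _).mp hresrev
    have hgne : (V.subtype (Polynomial.eval s f.reverse)) ≠ 0 :=
      fun h0 => hunit.ne_zero (Subtype.coe_injective h0)
    have key : (V.subtype (Polynomial.eval s f.reverse)) * t ^ f.natDegree
        = Polynomial.eval₂ V.subtype t f := by rw [← hevs, hrev]
    have hne : Polynomial.eval₂ V.subtype t f ≠ 0 := by
      rw [← key]
      exact mul_ne_zero hgne (pow_ne_zero _ ht0)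
    refine ⟨hne, ?_, ?_⟩
    · have : t ^ f.natDegree / Polynomial.eval₂ V.subtype t f
          = ((V.subtype (Polynomial.eval s f.reverse)))⁻¹ := by
        rw [← key]
        field_simp
      rw [this]; exact unit_inv_mem V hunit
    · have : (Polynomial.eval₂ V.subtype t f)⁻¹
          = (t⁻¹) ^ f.natDegree * ((V.subtype (Polynomial.eval s f.reverse)))⁻¹ := by
        rw [← key]
        field_simp
        rw [← mul_pow, mul_one_div_cancel ht0, one_pow]
      rw [this]
      exact mul_mem (pow_mem hinv _) (unit_inv_mem V hunit)
end

section
/- Let A be an integral domain with quotient field F such that for every nonzero t ∈ F there exists an integer k ≥ 1 with (A + tA)^{n^k} a principal fractional ideal, where n is a fixed positive integer. If A is a Prüfer domain, then the Picard group of A is an n-group, i.e., every element of Pic(A) has finite order whose prime divisors all divide n. -/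
open Submodule

section Aux

variable {A F : Type*} [CommRing A] [IsDomain A] [Field F] [Algebra A F] [IsFractionRing A F]

/-- Local-to-global membership principle. -/
lemma aux_local_global (M : Submodule A F) (x : F)
    (H : ∀ P : Ideal A, P.IsMaximal → ∃ s : A, s ∉ P ∧ s • x ∈ M) : x ∈ M := by
  set C : Ideal A :=
    { carrier := {a : A | a • x ∈ M}
      add_mem' := fun {a b} ha hb => by
        simpa [add_smul] using M.add_mem ha hb
      zero_mem' := by simp
      smul_mem' := fun c a ha => by
        simpa [smul_eq_mul, mul_smul] using M.smul_mem c ha } with hC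
  by_cases hT : C = ⊤
  · have h1 : (1 : A) ∈ C := hT ▸ Submodule.mem_top
    have h2 : (1 : A) • x ∈ M := h1
    simpa using h2
  · obtain ⟨P, hP, hCP⟩ := Ideal.exists_le_maximal C hT
    obtain ⟨s, hs, hsx⟩ := H P hP
    exact absurd (hCP hsx) hs

lemma aux_exists_min
    (hPrufer : ∀ P : Ideal A, P.IsPrime → ∀ x : F, x ≠ 0 →
      (∃ a s : A, s ∉ P ∧ x * algebraMap A F s = algebraMap A F a) ∨
      (∃ a s : A, s ∉ P ∧ x⁻¹ * algebraMap A F s = algebraMap A F a))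
    (P : Ideal A) (hP : P.IsMaximal) (S : Finset F) (hS : ∀ x ∈ S, x ≠ 0)
    (hne : S.Nonempty) : ∃ w ∈ S, ∀ y ∈ S, ∃ s a : A, s ∉ P ∧ s • y = a • w := by
  classical
  have hone : (1 : A) ∉ P := (Ideal.ne_top_iff_one P).mp hP.ne_top
  induction S using Finset.induction_on with
  | empty => exact absurd hne (by simp)
  | @insert x S hxS IH =>
    have hx0 : x ≠ 0 := hS x (Finset.mem_insert_self x S)
    rcases S.eq_empty_or_nonempty with rfl | hSne
    · refine ⟨x, Finset.mem_insert_self x _, ?_⟩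
      intro y hy
      simp only [Finset.mem_insert, Finset.notMem_empty, or_false] at hy
      subst hy
      exact ⟨1, 1, hone, rfl⟩
    · obtain ⟨w, hwS, hw⟩ := IH (fun z hz => hS z (Finset.mem_insert_of_mem hz)) hSne
      have hw0 : w ≠ 0 := hS w (Finset.mem_insert_of_mem hwS)
      rcases hPrufer P hP.isPrime (x / w) (div_ne_zero hx0 hw0) with ⟨a, s, hs, heq⟩ | ⟨a, s, hs, heq⟩
      · -- s • x = a • w : keep w as minimum
        rw [div_mul_eq_mul_div, div_eq_iff hw0] at heq
        refine ⟨w, Finset.mem_insert_of_mem hwS, ?_⟩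
        intro y hy
        rcases Finset.mem_insert.mp hy with rfl | hyS
        · exact ⟨s, a, hs, by rw [Algebra.smul_def, Algebra.smul_def, mul_comm, heq]⟩
        · exact hw y hyS
      · -- s • w = a • x : x is the new minimum
        rw [inv_div, div_mul_eq_mul_div, div_eq_iff hx0] at heq
        have hswx : s • w = a • x := by
          rw [Algebra.smul_def, Algebra.smul_def, mul_comm, heq]
        refine ⟨x, Finset.mem_insert_self x _, ?_⟩
        intro y hy
        rcases Finset.mem_insert.mp hy with rfl | hyS
        · exact ⟨1, 1, hone, rfl⟩
        · obtain ⟨s', a', hs', hsy⟩ := hw y hyS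
          refine ⟨s * s', a' * a, ?_, ?_⟩
          · intro hm
            rcases hP.isPrime.mem_or_mem hm with hh | hh
            exacts [hs hh, hs' hh]
          · rw [mul_smul, hsy, smul_comm, hswx, smul_comm, ← mul_smul, mul_comm a]

lemma aux_span_singleton_pow (u : F) (m : ℕ) :
    (Submodule.span A ({u} : Set F)) ^ m = Submodule.span A ({u ^ m} : Set F) := by
  induction m with
  | zero => simp [Submodule.one_eq_span]
  | succ m ih =>
    rw [pow_succ, ih, Submodule.span_mul_span, Set.singleton_mul_singleton, ← pow_succ]

lemma aux_pow_span
    (hPrufer : ∀ P : Ideal A, P.IsPrime → ∀ x : F, x ≠ 0 →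
      (∃ a s : A, s ∉ P ∧ x * algebraMap A F s = algebraMap A F a) ∨
      (∃ a s : A, s ∉ P ∧ x⁻¹ * algebraMap A F s = algebraMap A F a))
    (S : Finset F) (hS : ∀ x ∈ S, x ≠ 0) (m : ℕ) :
    (Submodule.span A (insert 1 ↑S : Set F)) ^ m
      = Submodule.span A (insert 1 ((fun t => t ^ m) '' ↑S) : Set F) := by
  classical
  rw [Submodule.span_pow]
  apply le_antisymm
  · rw [Submodule.span_le]
    intro x hx
    rw [Set.mem_pow] at hx
    obtain ⟨f, hf⟩ := hx
    have hfx : x = ∏ i, (f i : F) := by rw [← hf, List.prod_ofFn]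
    apply aux_local_global
    intro P hP
    obtain ⟨w, hwmem, hw⟩ := aux_exists_min hPrufer P hP (insert (1 : F) S)
      (by
        intro z hz
        rcases Finset.mem_insert.mp hz with rfl | hzS
        · exact one_ne_zero
        · exact hS z hzS)
      ⟨1, Finset.mem_insert_self 1 S⟩
    have hmemF : ∀ i : Fin m, (f i : F) ∈ insert (1 : F) S := by
      intro i
      have := (f i).2
      rw [Set.mem_insert_iff] at this
      rcases this with h1 | h2
      · rw [h1]; exact Finset.mem_insert_self 1 S
      · exact Finset.mem_insert_of_mem h2
    choose s a hs hsa using fun i : Fin m => hw (f i) (hmemF i)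
    refine ⟨∏ i, s i, ?_, ?_⟩
    · intro hm
      haveI := hP.isPrime
      rw [Ideal.IsPrime.prod_mem_iff] at hm
      obtain ⟨i, _, hi⟩ := hm
      exact hs i hi
    · have key : (∏ i, s i) • x = (∏ i, a i) • w ^ m := by
        rw [hfx, Algebra.smul_def, Algebra.smul_def, map_prod, map_prod,
          ← Finset.prod_mul_distrib]
        have : ∀ i ∈ Finset.univ, algebraMap A F (s i) * (f i : F)
            = algebraMap A F (a i) * w := by
          intro i _
          rw [← Algebra.smul_def, ← Algebra.smul_def, hsa i]
        rw [Finset.prod_congr rfl this, Finset.prod_mul_distrib, Finset.prod_const,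
          Finset.card_univ, Fintype.card_fin]
      rw [key]
      apply Submodule.smul_mem
      rcases Finset.mem_insert.mp hwmem with rfl | hwS
      · rw [one_pow]
        exact Submodule.subset_span (Set.mem_insert _ _)
      · exact Submodule.subset_span (Set.mem_insert_of_mem _ ⟨w, hwS, rfl⟩)
  · apply Submodule.span_mono
    rintro x (rfl | ⟨t, ht, rfl⟩)
    · exact Set.one_mem_pow (Set.mem_insert _ _)
    · exact Set.pow_mem_pow (Set.mem_insert_of_mem _ ht)

lemma aux_two
    (hPrufer : ∀ P : Ideal A, P.IsPrime → ∀ x : F, x ≠ 0 →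
      (∃ a s : A, s ∉ P ∧ x * algebraMap A F s = algebraMap A F a) ∨
      (∃ a s : A, s ∉ P ∧ x⁻¹ * algebraMap A F s = algebraMap A F a))
    (t : F) (ht : t ≠ 0) (m : ℕ) :
    (Submodule.span A ({1, t} : Set F)) ^ m = Submodule.span A ({1, t ^ m} : Set F) := by
  have := aux_pow_span hPrufer {t} (by simpa using ht) m
  simpa using this

lemma aux_key (n : ℕ)
    (hPrufer : ∀ P : Ideal A, P.IsPrime → ∀ x : F, x ≠ 0 →
      (∃ a s : A, s ∉ P ∧ x * algebraMap A F s = algebraMap A F a) ∨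
      (∃ a s : A, s ∉ P ∧ x⁻¹ * algebraMap A F s = algebraMap A F a))
    (h : ∀ t : F, t ≠ 0 → ∃ k : ℕ, 1 ≤ k ∧ ∃ u : F,
      (Submodule.span A ({1, t} : Set F)) ^ (n ^ k) = Submodule.span A ({u} : Set F)) :
    ∀ (N : ℕ) (S : Finset F), S.card ≤ N → (∀ x ∈ S, x ≠ 0) →
      ∃ (k : ℕ) (u : F),
        (Submodule.span A (insert 1 ↑S : Set F)) ^ (n ^ k)
          = Submodule.span A ({u} : Set F) := by
  classical
  intro N
  induction N with
  | zero =>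
    intro S hcard _
    have hSe : S = ∅ := Finset.card_eq_zero.mp (Nat.le_zero.mp hcard)
    subst hSe
    exact ⟨0, 1, by simp⟩
  | succ N IH =>
    intro S hcard hS
    rcases S.eq_empty_or_nonempty with rfl | ⟨t₀, ht₀⟩
    · exact ⟨0, 1, by simp⟩
    · have hch : ∀ t ∈ S, ∃ k : ℕ, 1 ≤ k ∧ ∃ u : F,
          (Submodule.span A ({1, t} : Set F)) ^ (n ^ k)
            = Submodule.span A ({u} : Set F) :=
        fun t ht => h t (hS t ht)
      choose! K hK1 U hU using hch
      set k := S.sup K with hk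
      set N1 := n ^ k with hN1
      set v : F → F := fun t => U t ^ (n ^ (k - K t)) with hv
      have hvt : ∀ t ∈ S, Submodule.span A ({1, t ^ N1} : Set F)
          = Submodule.span A ({v t} : Set F) := by
        intro t ht
        have hpow : N1 = n ^ K t * n ^ (k - K t) := by
          rw [← pow_add, Nat.add_sub_cancel' (Finset.le_sup ht)]
        rw [← aux_two hPrufer t (hS t ht) N1, hpow, pow_mul, hU t ht,
          aux_span_singleton_pow]
      have hv1 : ∀ t ∈ S, (1 : F) ∈ Submodule.span A ({v t} : Set F) := by
        intro t ht
        rw [← hvt t ht]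
        exact Submodule.subset_span (Set.mem_insert _ _)
      have hv0 : ∀ t ∈ S, v t ≠ 0 := by
        intro t ht h0
        have := hv1 t ht
        rw [h0, Submodule.span_zero_singleton, Submodule.mem_bot] at this
        exact one_ne_zero this
      -- step 1
      have e1 : Submodule.span A (insert 1 ↑S : Set F) ^ N1
          = Submodule.span A (insert 1 (v '' ↑S) : Set F) := by
        rw [aux_pow_span hPrufer S hS N1]
        apply le_antisymm <;> rw [Submodule.span_le] <;> rintro x hx
        · rcases hx with rfl | ⟨t, ht, rfl⟩
          · exact Submodule.subset_span (Set.mem_insert _ _)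
          · have htS : t ∈ S := ht
            have hmem : t ^ N1 ∈ Submodule.span A ({v t} : Set F) := by
              rw [← hvt t htS]
              exact Submodule.subset_span (Set.mem_insert_of_mem _ rfl)
            exact Submodule.span_mono
              (Set.singleton_subset_iff.mpr
                (Set.mem_insert_of_mem _ (Set.mem_image_of_mem _ ht))) hmem
        · rcases hx with rfl | ⟨t, ht, rfl⟩
          · exact Submodule.subset_span (Set.mem_insert _ _)
          · have htS : t ∈ S := ht
            have hmem : v t ∈ Submodule.span A ({1, t ^ N1} : Set F) := by
              rw [hvt t htS]
              exact Submodule.subset_span rfl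
            refine Submodule.span_mono ?_ hmem
            rintro z (rfl | rfl)
            · exact Set.mem_insert _ _
            · exact Set.mem_insert_of_mem _ (Set.mem_image_of_mem _ ht)
      -- step 2 : drop the 1
      have h1mem : (1 : F) ∈ Submodule.span A (v '' ↑S : Set F) :=
        Submodule.span_mono
          (Set.singleton_subset_iff.mpr (Set.mem_image_of_mem v (Finset.mem_coe.mpr ht₀)))
          (hv1 t₀ ht₀)
      have e2 : Submodule.span A (insert 1 (v '' ↑S) : Set F)
          = Submodule.span A (v '' ↑S : Set F) := by
        apply le_antisymm
        · rw [Submodule.span_le]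
          rintro x (rfl | hx)
          · exact h1mem
          · exact Submodule.subset_span hx
        · exact Submodule.span_mono (Set.subset_insert _ _)
      -- step 3 : factor out v t₀
      set T : Finset F := S.image (fun t => v t / v t₀) with hT
      have ht₀0 : v t₀ ≠ 0 := hv0 t₀ ht₀
      have e3 : Submodule.span A (v '' ↑S : Set F)
          = Submodule.span A ({v t₀} : Set F) * Submodule.span A (↑T : Set F) := by
        rw [Submodule.span_mul_span, Set.singleton_mul, Finset.coe_image,
          Set.image_image]
        congr 1
        exact (Set.image_congr fun t _ => by
          rw [mul_comm, div_mul_cancel₀ _ ht₀0]).symm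
      have h1T : (1 : F) ∈ T :=
        Finset.mem_image.mpr ⟨t₀, ht₀, div_self ht₀0⟩
      set W : Finset F := T.erase 1 with hW
      have hTW : (insert 1 ↑W : Set F) = (↑T : Set F) := by
        rw [← Finset.coe_insert, Finset.insert_erase h1T]
      have hWcard : W.card ≤ N := by
        have h1 : W.card = T.card - 1 := Finset.card_erase_of_mem h1T
        have h2 : T.card ≤ S.card := Finset.card_image_le
        omega
      have hW0 : ∀ x ∈ W, x ≠ 0 := by
        intro x hx
        obtain ⟨t, htS, rfl⟩ := Finset.mem_image.mp (Finset.mem_of_mem_erase hx)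
        exact div_ne_zero (hv0 t htS) ht₀0
      obtain ⟨k', u', hu'⟩ := IH W hWcard hW0
      refine ⟨k + k', v t₀ ^ (n ^ k') * u', ?_⟩
      have hsplit : n ^ (k + k') = N1 * n ^ k' := by rw [pow_add, hN1]
      rw [hsplit, pow_mul, e1, e2, e3, ← hTW, mul_pow, hu', aux_span_singleton_pow,
        Submodule.span_mul_span, Set.singleton_mul_singleton]

end Aux

/-- Roquette: if `A` is a Prüfer domain with quotient field `F` and for every nonzero `t ∈ F`
there is `k ≥ 1` with `(A + tA)^{n^k}` principal, then the Picard group of `A` is an `n`-group: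
every element is killed by some power `n^k`. -/
theorem prufer_picard_n_group
    {A F : Type*} [CommRing A] [IsDomain A] [Field F] [Algebra A F] [IsFractionRing A F]
    (n : ℕ) (hn : 0 < n)
    (hPrufer : ∀ P : Ideal A, P.IsPrime → ∀ x : F, x ≠ 0 →
      (∃ a s : A, s ∉ P ∧ x * algebraMap A F s = algebraMap A F a) ∨
      (∃ a s : A, s ∉ P ∧ x⁻¹ * algebraMap A F s = algebraMap A F a))
    (h : ∀ t : F, t ≠ 0 → ∃ k : ℕ, 1 ≤ k ∧ ∃ u : F,
      (Submodule.span A ({1, t} : Set F)) ^ (n ^ k) = Submodule.span A ({u} : Set F)) :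
    ∀ J : (FractionalIdeal (nonZeroDivisors A) F)ˣ, ∃ k : ℕ, ∃ u : F,
      (J : FractionalIdeal (nonZeroDivisors A) F) ^ (n ^ k) =
        FractionalIdeal.spanSingleton (nonZeroDivisors A) u := by
  classical
  intro J
  obtain ⟨S, hSspan⟩ := FractionalIdeal.fg_unit J
  -- the fractional ideal is nonzero
  have hJ0 : ((J : FractionalIdeal (nonZeroDivisors A) F) : Submodule A F) ≠ ⊥ := by
    intro hbot
    have hz : (J : FractionalIdeal (nonZeroDivisors A) F) = 0 :=
      FractionalIdeal.coeToSubmodule_eq_bot.mp hbot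
    have hmul : (J : FractionalIdeal (nonZeroDivisors A) F) * ↑J⁻¹ = 1 := J.mul_inv
    rw [hz, zero_mul] at hmul
    have : ((0 : FractionalIdeal (nonZeroDivisors A) F) : Submodule A F)
        = ((1 : FractionalIdeal (nonZeroDivisors A) F) : Submodule A F) := by rw [hmul]
    rw [FractionalIdeal.coe_zero, FractionalIdeal.coe_one] at this
    have h1 : (1 : F) ∈ (1 : Submodule A F) := one_le.mp le_rfl
    rw [← this, Submodule.mem_bot] at h1
    exact one_ne_zero h1
  set s₀ : Finset F := S.filter (fun x => x ≠ 0) with hs₀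
  have hspan0 : Submodule.span A (↑s₀ : Set F) = Submodule.span A (↑S : Set F) := by
    apply le_antisymm
    · exact Submodule.span_mono (by exact_mod_cast Finset.filter_subset _ _)
    · rw [Submodule.span_le]
      intro x hx
      by_cases hx0 : x = 0
      · rw [hx0]; exact Submodule.zero_mem _
      · exact Submodule.subset_span (by
          exact_mod_cast Finset.mem_filter.mpr ⟨hx, hx0⟩)
  have hs₀span : Submodule.span A (↑s₀ : Set F)
      = ((J : FractionalIdeal (nonZeroDivisors A) F) : Submodule A F) := by
    rw [hspan0, hSspan]
  have hs₀ne : s₀.Nonempty := by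
    rcases s₀.eq_empty_or_nonempty with he | hne
    · exfalso
      apply hJ0
      rw [← hs₀span, he]
      simp
    · exact hne
  obtain ⟨a, haS⟩ := hs₀ne
  have ha0 : a ≠ 0 := (Finset.mem_filter.mp haS).2
  set U : Finset F := s₀.image (fun x => x / a) with hUdef
  have h1U : (1 : F) ∈ U := Finset.mem_image.mpr ⟨a, haS, div_self ha0⟩
  set V : Finset F := U.erase 1 with hVdef
  have hUV : (insert 1 ↑V : Set F) = (↑U : Set F) := by
    rw [← Finset.coe_insert, Finset.insert_erase h1U]
  have hV0 : ∀ x ∈ V, x ≠ 0 := by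
    intro x hx
    obtain ⟨y, hy, rfl⟩ := Finset.mem_image.mp (Finset.mem_of_mem_erase hx)
    exact div_ne_zero ((Finset.mem_filter.mp hy).2) ha0
  have hfact : Submodule.span A (↑s₀ : Set F)
      = Submodule.span A ({a} : Set F) * Submodule.span A (↑U : Set F) := by
    rw [Submodule.span_mul_span, Set.singleton_mul, hUdef, Finset.coe_image,
      Set.image_image]
    congr 1
    have himg : (fun x : F => a * (x / a)) '' (↑s₀ : Set F) = (↑s₀ : Set F) := by
      ext y
      constructor
      · rintro ⟨x, hx, rfl⟩
        show a * (x / a) ∈ (↑s₀ : Set F)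
        rwa [mul_comm, div_mul_cancel₀ _ ha0]
      · intro hy
        exact ⟨y, hy, by show a * (y / a) = y; rw [mul_comm, div_mul_cancel₀ _ ha0]⟩
    exact himg.symm
  obtain ⟨k, u, hu⟩ := aux_key n hPrufer h V.card V le_rfl hV0
  refine ⟨k, a ^ (n ^ k) * u, ?_⟩
  apply FractionalIdeal.coeToSubmodule_injective
  simp only [FractionalIdeal.coe_pow, FractionalIdeal.coe_spanSingleton]
  rw [← hs₀span, hfact, mul_pow, aux_span_singleton_pow, ← hUV, hu,
    Submodule.span_mul_span, Set.singleton_mul_singleton]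
end
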